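/- arXiv:0901.4431 — 7 statements merged into one kernel-verified Lean document; each statement's English description precedes it below -/
import Mathlib

section
/- The Burniat polytope Δ_bur is a nonempty compact convex subset of ℝ^12 whose affine dimension equals 8. (For instance, the point with all twelve coordinates equal to 1/3 lies in Δ_bur and satisfies all twelve inequality constraints strictly.) -/
/-- The Burniat polytope `Δ_bur ⊆ ℝ^12`. Coordinates: `a_i = x i` for `i = 0,…,3`,
`b_i = x (4+i)`, `c_i = x (8+i)`. -/
def burniatPolytope : Set (Fin 12 → ℝ) :=
  {x | (∀ i : Fin 12, 0 ≤ x i ∧ x i ≤ 1/2) ∧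
    (x 0 + x 4 + x 8) + (x 1 + x 5 + x 9) + (x 2 + x 6 + x 10) = 3 ∧
    x 3 = x 8 + x 9 + x 10 + x 4 - 1 ∧
    x 7 = x 0 + x 1 + x 2 + x 8 - 1 ∧
    x 11 = x 4 + x 5 + x 6 + x 0 - 1}

/-- Eight direction vectors spanning the vector span of the Burniat polytope. -/
noncomputable def bV : Fin 8 → (Fin 12 → ℝ) :=
  ![![1,-1,0,0, 0,0,0,0, 0,0,0,1],
    ![0,1,-1,0, 0,0,0,0, 0,0,0,0],
    ![0,0,0,1, 1,-1,0,0, 0,0,0,0],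
    ![0,0,0,0, 0,1,-1,0, 0,0,0,0],
    ![0,0,0,0, 0,0,0,1, 1,-1,0,0],
    ![0,0,0,0, 0,0,0,0, 0,1,-1,0],
    ![1,0,0,-1, -1,0,0,1, 0,0,0,0],
    ![0,0,0,0, 1,0,0,-1, -1,0,0,1]]


@[simp] lemma bV_0_0 : bV 0 0 = 1 := rfl
@[simp] lemma bV_mk_0_0 (h : 0 < 8) : bV ⟨0,h⟩ 0 = 1 := rfl
@[simp] lemma bV_mk2_0_0 (h : 0 < 8) (h' : 0 < 12) : bV ⟨0,h⟩ ⟨0,h'⟩ = 1 := rfl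
@[simp] lemma bV_mk3_0_0 (h' : 0 < 12) : bV 0 ⟨0,h'⟩ = 1 := rfl
@[simp] lemma bV_0_1 : bV 0 1 = (-1) := rfl
@[simp] lemma bV_mk_0_1 (h : 0 < 8) : bV ⟨0,h⟩ 1 = (-1) := rfl
@[simp] lemma bV_mk2_0_1 (h : 0 < 8) (h' : 1 < 12) : bV ⟨0,h⟩ ⟨1,h'⟩ = (-1) := rfl
@[simp] lemma bV_mk3_0_1 (h' : 1 < 12) : bV 0 ⟨1,h'⟩ = (-1) := rfl
@[simp] lemma bV_0_2 : bV 0 2 = 0 := rfl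
@[simp] lemma bV_mk_0_2 (h : 0 < 8) : bV ⟨0,h⟩ 2 = 0 := rfl
@[simp] lemma bV_mk2_0_2 (h : 0 < 8) (h' : 2 < 12) : bV ⟨0,h⟩ ⟨2,h'⟩ = 0 := rfl
@[simp] lemma bV_mk3_0_2 (h' : 2 < 12) : bV 0 ⟨2,h'⟩ = 0 := rfl
@[simp] lemma bV_0_3 : bV 0 3 = 0 := rfl
@[simp] lemma bV_mk_0_3 (h : 0 < 8) : bV ⟨0,h⟩ 3 = 0 := rfl
@[simp] lemma bV_mk2_0_3 (h : 0 < 8) (h' : 3 < 12) : bV ⟨0,h⟩ ⟨3,h'⟩ = 0 := rfl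
@[simp] lemma bV_mk3_0_3 (h' : 3 < 12) : bV 0 ⟨3,h'⟩ = 0 := rfl
@[simp] lemma bV_0_4 : bV 0 4 = 0 := rfl
@[simp] lemma bV_mk_0_4 (h : 0 < 8) : bV ⟨0,h⟩ 4 = 0 := rfl
@[simp] lemma bV_mk2_0_4 (h : 0 < 8) (h' : 4 < 12) : bV ⟨0,h⟩ ⟨4,h'⟩ = 0 := rfl
@[simp] lemma bV_mk3_0_4 (h' : 4 < 12) : bV 0 ⟨4,h'⟩ = 0 := rfl
@[simp] lemma bV_0_5 : bV 0 5 = 0 := rfl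
@[simp] lemma bV_mk_0_5 (h : 0 < 8) : bV ⟨0,h⟩ 5 = 0 := rfl
@[simp] lemma bV_mk2_0_5 (h : 0 < 8) (h' : 5 < 12) : bV ⟨0,h⟩ ⟨5,h'⟩ = 0 := rfl
@[simp] lemma bV_mk3_0_5 (h' : 5 < 12) : bV 0 ⟨5,h'⟩ = 0 := rfl
@[simp] lemma bV_0_6 : bV 0 6 = 0 := rfl
@[simp] lemma bV_mk_0_6 (h : 0 < 8) : bV ⟨0,h⟩ 6 = 0 := rfl
@[simp] lemma bV_mk2_0_6 (h : 0 < 8) (h' : 6 < 12) : bV ⟨0,h⟩ ⟨6,h'⟩ = 0 := rfl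
@[simp] lemma bV_mk3_0_6 (h' : 6 < 12) : bV 0 ⟨6,h'⟩ = 0 := rfl
@[simp] lemma bV_0_7 : bV 0 7 = 0 := rfl
@[simp] lemma bV_mk_0_7 (h : 0 < 8) : bV ⟨0,h⟩ 7 = 0 := rfl
@[simp] lemma bV_mk2_0_7 (h : 0 < 8) (h' : 7 < 12) : bV ⟨0,h⟩ ⟨7,h'⟩ = 0 := rfl
@[simp] lemma bV_mk3_0_7 (h' : 7 < 12) : bV 0 ⟨7,h'⟩ = 0 := rfl
@[simp] lemma bV_0_8 : bV 0 8 = 0 := rfl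
@[simp] lemma bV_mk_0_8 (h : 0 < 8) : bV ⟨0,h⟩ 8 = 0 := rfl
@[simp] lemma bV_mk2_0_8 (h : 0 < 8) (h' : 8 < 12) : bV ⟨0,h⟩ ⟨8,h'⟩ = 0 := rfl
@[simp] lemma bV_mk3_0_8 (h' : 8 < 12) : bV 0 ⟨8,h'⟩ = 0 := rfl
@[simp] lemma bV_0_9 : bV 0 9 = 0 := rfl
@[simp] lemma bV_mk_0_9 (h : 0 < 8) : bV ⟨0,h⟩ 9 = 0 := rfl
@[simp] lemma bV_mk2_0_9 (h : 0 < 8) (h' : 9 < 12) : bV ⟨0,h⟩ ⟨9,h'⟩ = 0 := rfl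
@[simp] lemma bV_mk3_0_9 (h' : 9 < 12) : bV 0 ⟨9,h'⟩ = 0 := rfl
@[simp] lemma bV_0_10 : bV 0 10 = 0 := rfl
@[simp] lemma bV_mk_0_10 (h : 0 < 8) : bV ⟨0,h⟩ 10 = 0 := rfl
@[simp] lemma bV_mk2_0_10 (h : 0 < 8) (h' : 10 < 12) : bV ⟨0,h⟩ ⟨10,h'⟩ = 0 := rfl
@[simp] lemma bV_mk3_0_10 (h' : 10 < 12) : bV 0 ⟨10,h'⟩ = 0 := rfl
@[simp] lemma bV_0_11 : bV 0 11 = 1 := rfl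
@[simp] lemma bV_mk_0_11 (h : 0 < 8) : bV ⟨0,h⟩ 11 = 1 := rfl
@[simp] lemma bV_mk2_0_11 (h : 0 < 8) (h' : 11 < 12) : bV ⟨0,h⟩ ⟨11,h'⟩ = 1 := rfl
@[simp] lemma bV_mk3_0_11 (h' : 11 < 12) : bV 0 ⟨11,h'⟩ = 1 := rfl
@[simp] lemma bV_1_0 : bV 1 0 = 0 := rfl
@[simp] lemma bV_mk_1_0 (h : 1 < 8) : bV ⟨1,h⟩ 0 = 0 := rfl
@[simp] lemma bV_mk2_1_0 (h : 1 < 8) (h' : 0 < 12) : bV ⟨1,h⟩ ⟨0,h'⟩ = 0 := rfl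
@[simp] lemma bV_mk3_1_0 (h' : 0 < 12) : bV 1 ⟨0,h'⟩ = 0 := rfl
@[simp] lemma bV_1_1 : bV 1 1 = 1 := rfl
@[simp] lemma bV_mk_1_1 (h : 1 < 8) : bV ⟨1,h⟩ 1 = 1 := rfl
@[simp] lemma bV_mk2_1_1 (h : 1 < 8) (h' : 1 < 12) : bV ⟨1,h⟩ ⟨1,h'⟩ = 1 := rfl
@[simp] lemma bV_mk3_1_1 (h' : 1 < 12) : bV 1 ⟨1,h'⟩ = 1 := rfl
@[simp] lemma bV_1_2 : bV 1 2 = (-1) := rfl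
@[simp] lemma bV_mk_1_2 (h : 1 < 8) : bV ⟨1,h⟩ 2 = (-1) := rfl
@[simp] lemma bV_mk2_1_2 (h : 1 < 8) (h' : 2 < 12) : bV ⟨1,h⟩ ⟨2,h'⟩ = (-1) := rfl
@[simp] lemma bV_mk3_1_2 (h' : 2 < 12) : bV 1 ⟨2,h'⟩ = (-1) := rfl
@[simp] lemma bV_1_3 : bV 1 3 = 0 := rfl
@[simp] lemma bV_mk_1_3 (h : 1 < 8) : bV ⟨1,h⟩ 3 = 0 := rfl
@[simp] lemma bV_mk2_1_3 (h : 1 < 8) (h' : 3 < 12) : bV ⟨1,h⟩ ⟨3,h'⟩ = 0 := rfl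
@[simp] lemma bV_mk3_1_3 (h' : 3 < 12) : bV 1 ⟨3,h'⟩ = 0 := rfl
@[simp] lemma bV_1_4 : bV 1 4 = 0 := rfl
@[simp] lemma bV_mk_1_4 (h : 1 < 8) : bV ⟨1,h⟩ 4 = 0 := rfl
@[simp] lemma bV_mk2_1_4 (h : 1 < 8) (h' : 4 < 12) : bV ⟨1,h⟩ ⟨4,h'⟩ = 0 := rfl
@[simp] lemma bV_mk3_1_4 (h' : 4 < 12) : bV 1 ⟨4,h'⟩ = 0 := rfl
@[simp] lemma bV_1_5 : bV 1 5 = 0 := rfl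
@[simp] lemma bV_mk_1_5 (h : 1 < 8) : bV ⟨1,h⟩ 5 = 0 := rfl
@[simp] lemma bV_mk2_1_5 (h : 1 < 8) (h' : 5 < 12) : bV ⟨1,h⟩ ⟨5,h'⟩ = 0 := rfl
@[simp] lemma bV_mk3_1_5 (h' : 5 < 12) : bV 1 ⟨5,h'⟩ = 0 := rfl
@[simp] lemma bV_1_6 : bV 1 6 = 0 := rfl
@[simp] lemma bV_mk_1_6 (h : 1 < 8) : bV ⟨1,h⟩ 6 = 0 := rfl
@[simp] lemma bV_mk2_1_6 (h : 1 < 8) (h' : 6 < 12) : bV ⟨1,h⟩ ⟨6,h'⟩ = 0 := rfl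
@[simp] lemma bV_mk3_1_6 (h' : 6 < 12) : bV 1 ⟨6,h'⟩ = 0 := rfl
@[simp] lemma bV_1_7 : bV 1 7 = 0 := rfl
@[simp] lemma bV_mk_1_7 (h : 1 < 8) : bV ⟨1,h⟩ 7 = 0 := rfl
@[simp] lemma bV_mk2_1_7 (h : 1 < 8) (h' : 7 < 12) : bV ⟨1,h⟩ ⟨7,h'⟩ = 0 := rfl
@[simp] lemma bV_mk3_1_7 (h' : 7 < 12) : bV 1 ⟨7,h'⟩ = 0 := rfl
@[simp] lemma bV_1_8 : bV 1 8 = 0 := rfl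
@[simp] lemma bV_mk_1_8 (h : 1 < 8) : bV ⟨1,h⟩ 8 = 0 := rfl
@[simp] lemma bV_mk2_1_8 (h : 1 < 8) (h' : 8 < 12) : bV ⟨1,h⟩ ⟨8,h'⟩ = 0 := rfl
@[simp] lemma bV_mk3_1_8 (h' : 8 < 12) : bV 1 ⟨8,h'⟩ = 0 := rfl
@[simp] lemma bV_1_9 : bV 1 9 = 0 := rfl
@[simp] lemma bV_mk_1_9 (h : 1 < 8) : bV ⟨1,h⟩ 9 = 0 := rfl
@[simp] lemma bV_mk2_1_9 (h : 1 < 8) (h' : 9 < 12) : bV ⟨1,h⟩ ⟨9,h'⟩ = 0 := rfl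
@[simp] lemma bV_mk3_1_9 (h' : 9 < 12) : bV 1 ⟨9,h'⟩ = 0 := rfl
@[simp] lemma bV_1_10 : bV 1 10 = 0 := rfl
@[simp] lemma bV_mk_1_10 (h : 1 < 8) : bV ⟨1,h⟩ 10 = 0 := rfl
@[simp] lemma bV_mk2_1_10 (h : 1 < 8) (h' : 10 < 12) : bV ⟨1,h⟩ ⟨10,h'⟩ = 0 := rfl
@[simp] lemma bV_mk3_1_10 (h' : 10 < 12) : bV 1 ⟨10,h'⟩ = 0 := rfl
@[simp] lemma bV_1_11 : bV 1 11 = 0 := rfl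
@[simp] lemma bV_mk_1_11 (h : 1 < 8) : bV ⟨1,h⟩ 11 = 0 := rfl
@[simp] lemma bV_mk2_1_11 (h : 1 < 8) (h' : 11 < 12) : bV ⟨1,h⟩ ⟨11,h'⟩ = 0 := rfl
@[simp] lemma bV_mk3_1_11 (h' : 11 < 12) : bV 1 ⟨11,h'⟩ = 0 := rfl
@[simp] lemma bV_2_0 : bV 2 0 = 0 := rfl
@[simp] lemma bV_mk_2_0 (h : 2 < 8) : bV ⟨2,h⟩ 0 = 0 := rfl
@[simp] lemma bV_mk2_2_0 (h : 2 < 8) (h' : 0 < 12) : bV ⟨2,h⟩ ⟨0,h'⟩ = 0 := rfl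
@[simp] lemma bV_mk3_2_0 (h' : 0 < 12) : bV 2 ⟨0,h'⟩ = 0 := rfl
@[simp] lemma bV_2_1 : bV 2 1 = 0 := rfl
@[simp] lemma bV_mk_2_1 (h : 2 < 8) : bV ⟨2,h⟩ 1 = 0 := rfl
@[simp] lemma bV_mk2_2_1 (h : 2 < 8) (h' : 1 < 12) : bV ⟨2,h⟩ ⟨1,h'⟩ = 0 := rfl
@[simp] lemma bV_mk3_2_1 (h' : 1 < 12) : bV 2 ⟨1,h'⟩ = 0 := rfl
@[simp] lemma bV_2_2 : bV 2 2 = 0 := rfl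
@[simp] lemma bV_mk_2_2 (h : 2 < 8) : bV ⟨2,h⟩ 2 = 0 := rfl
@[simp] lemma bV_mk2_2_2 (h : 2 < 8) (h' : 2 < 12) : bV ⟨2,h⟩ ⟨2,h'⟩ = 0 := rfl
@[simp] lemma bV_mk3_2_2 (h' : 2 < 12) : bV 2 ⟨2,h'⟩ = 0 := rfl
@[simp] lemma bV_2_3 : bV 2 3 = 1 := rfl
@[simp] lemma bV_mk_2_3 (h : 2 < 8) : bV ⟨2,h⟩ 3 = 1 := rfl
@[simp] lemma bV_mk2_2_3 (h : 2 < 8) (h' : 3 < 12) : bV ⟨2,h⟩ ⟨3,h'⟩ = 1 := rfl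
@[simp] lemma bV_mk3_2_3 (h' : 3 < 12) : bV 2 ⟨3,h'⟩ = 1 := rfl
@[simp] lemma bV_2_4 : bV 2 4 = 1 := rfl
@[simp] lemma bV_mk_2_4 (h : 2 < 8) : bV ⟨2,h⟩ 4 = 1 := rfl
@[simp] lemma bV_mk2_2_4 (h : 2 < 8) (h' : 4 < 12) : bV ⟨2,h⟩ ⟨4,h'⟩ = 1 := rfl
@[simp] lemma bV_mk3_2_4 (h' : 4 < 12) : bV 2 ⟨4,h'⟩ = 1 := rfl
@[simp] lemma bV_2_5 : bV 2 5 = (-1) := rfl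
@[simp] lemma bV_mk_2_5 (h : 2 < 8) : bV ⟨2,h⟩ 5 = (-1) := rfl
@[simp] lemma bV_mk2_2_5 (h : 2 < 8) (h' : 5 < 12) : bV ⟨2,h⟩ ⟨5,h'⟩ = (-1) := rfl
@[simp] lemma bV_mk3_2_5 (h' : 5 < 12) : bV 2 ⟨5,h'⟩ = (-1) := rfl
@[simp] lemma bV_2_6 : bV 2 6 = 0 := rfl
@[simp] lemma bV_mk_2_6 (h : 2 < 8) : bV ⟨2,h⟩ 6 = 0 := rfl
@[simp] lemma bV_mk2_2_6 (h : 2 < 8) (h' : 6 < 12) : bV ⟨2,h⟩ ⟨6,h'⟩ = 0 := rfl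
@[simp] lemma bV_mk3_2_6 (h' : 6 < 12) : bV 2 ⟨6,h'⟩ = 0 := rfl
@[simp] lemma bV_2_7 : bV 2 7 = 0 := rfl
@[simp] lemma bV_mk_2_7 (h : 2 < 8) : bV ⟨2,h⟩ 7 = 0 := rfl
@[simp] lemma bV_mk2_2_7 (h : 2 < 8) (h' : 7 < 12) : bV ⟨2,h⟩ ⟨7,h'⟩ = 0 := rfl
@[simp] lemma bV_mk3_2_7 (h' : 7 < 12) : bV 2 ⟨7,h'⟩ = 0 := rfl
@[simp] lemma bV_2_8 : bV 2 8 = 0 := rfl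
@[simp] lemma bV_mk_2_8 (h : 2 < 8) : bV ⟨2,h⟩ 8 = 0 := rfl
@[simp] lemma bV_mk2_2_8 (h : 2 < 8) (h' : 8 < 12) : bV ⟨2,h⟩ ⟨8,h'⟩ = 0 := rfl
@[simp] lemma bV_mk3_2_8 (h' : 8 < 12) : bV 2 ⟨8,h'⟩ = 0 := rfl
@[simp] lemma bV_2_9 : bV 2 9 = 0 := rfl
@[simp] lemma bV_mk_2_9 (h : 2 < 8) : bV ⟨2,h⟩ 9 = 0 := rfl
@[simp] lemma bV_mk2_2_9 (h : 2 < 8) (h' : 9 < 12) : bV ⟨2,h⟩ ⟨9,h'⟩ = 0 := rfl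
@[simp] lemma bV_mk3_2_9 (h' : 9 < 12) : bV 2 ⟨9,h'⟩ = 0 := rfl
@[simp] lemma bV_2_10 : bV 2 10 = 0 := rfl
@[simp] lemma bV_mk_2_10 (h : 2 < 8) : bV ⟨2,h⟩ 10 = 0 := rfl
@[simp] lemma bV_mk2_2_10 (h : 2 < 8) (h' : 10 < 12) : bV ⟨2,h⟩ ⟨10,h'⟩ = 0 := rfl
@[simp] lemma bV_mk3_2_10 (h' : 10 < 12) : bV 2 ⟨10,h'⟩ = 0 := rfl
@[simp] lemma bV_2_11 : bV 2 11 = 0 := rfl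
@[simp] lemma bV_mk_2_11 (h : 2 < 8) : bV ⟨2,h⟩ 11 = 0 := rfl
@[simp] lemma bV_mk2_2_11 (h : 2 < 8) (h' : 11 < 12) : bV ⟨2,h⟩ ⟨11,h'⟩ = 0 := rfl
@[simp] lemma bV_mk3_2_11 (h' : 11 < 12) : bV 2 ⟨11,h'⟩ = 0 := rfl
@[simp] lemma bV_3_0 : bV 3 0 = 0 := rfl
@[simp] lemma bV_mk_3_0 (h : 3 < 8) : bV ⟨3,h⟩ 0 = 0 := rfl
@[simp] lemma bV_mk2_3_0 (h : 3 < 8) (h' : 0 < 12) : bV ⟨3,h⟩ ⟨0,h'⟩ = 0 := rfl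
@[simp] lemma bV_mk3_3_0 (h' : 0 < 12) : bV 3 ⟨0,h'⟩ = 0 := rfl
@[simp] lemma bV_3_1 : bV 3 1 = 0 := rfl
@[simp] lemma bV_mk_3_1 (h : 3 < 8) : bV ⟨3,h⟩ 1 = 0 := rfl
@[simp] lemma bV_mk2_3_1 (h : 3 < 8) (h' : 1 < 12) : bV ⟨3,h⟩ ⟨1,h'⟩ = 0 := rfl
@[simp] lemma bV_mk3_3_1 (h' : 1 < 12) : bV 3 ⟨1,h'⟩ = 0 := rfl
@[simp] lemma bV_3_2 : bV 3 2 = 0 := rfl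
@[simp] lemma bV_mk_3_2 (h : 3 < 8) : bV ⟨3,h⟩ 2 = 0 := rfl
@[simp] lemma bV_mk2_3_2 (h : 3 < 8) (h' : 2 < 12) : bV ⟨3,h⟩ ⟨2,h'⟩ = 0 := rfl
@[simp] lemma bV_mk3_3_2 (h' : 2 < 12) : bV 3 ⟨2,h'⟩ = 0 := rfl
@[simp] lemma bV_3_3 : bV 3 3 = 0 := rfl
@[simp] lemma bV_mk_3_3 (h : 3 < 8) : bV ⟨3,h⟩ 3 = 0 := rfl
@[simp] lemma bV_mk2_3_3 (h : 3 < 8) (h' : 3 < 12) : bV ⟨3,h⟩ ⟨3,h'⟩ = 0 := rfl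
@[simp] lemma bV_mk3_3_3 (h' : 3 < 12) : bV 3 ⟨3,h'⟩ = 0 := rfl
@[simp] lemma bV_3_4 : bV 3 4 = 0 := rfl
@[simp] lemma bV_mk_3_4 (h : 3 < 8) : bV ⟨3,h⟩ 4 = 0 := rfl
@[simp] lemma bV_mk2_3_4 (h : 3 < 8) (h' : 4 < 12) : bV ⟨3,h⟩ ⟨4,h'⟩ = 0 := rfl
@[simp] lemma bV_mk3_3_4 (h' : 4 < 12) : bV 3 ⟨4,h'⟩ = 0 := rfl
@[simp] lemma bV_3_5 : bV 3 5 = 1 := rfl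
@[simp] lemma bV_mk_3_5 (h : 3 < 8) : bV ⟨3,h⟩ 5 = 1 := rfl
@[simp] lemma bV_mk2_3_5 (h : 3 < 8) (h' : 5 < 12) : bV ⟨3,h⟩ ⟨5,h'⟩ = 1 := rfl
@[simp] lemma bV_mk3_3_5 (h' : 5 < 12) : bV 3 ⟨5,h'⟩ = 1 := rfl
@[simp] lemma bV_3_6 : bV 3 6 = (-1) := rfl
@[simp] lemma bV_mk_3_6 (h : 3 < 8) : bV ⟨3,h⟩ 6 = (-1) := rfl
@[simp] lemma bV_mk2_3_6 (h : 3 < 8) (h' : 6 < 12) : bV ⟨3,h⟩ ⟨6,h'⟩ = (-1) := rfl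
@[simp] lemma bV_mk3_3_6 (h' : 6 < 12) : bV 3 ⟨6,h'⟩ = (-1) := rfl
@[simp] lemma bV_3_7 : bV 3 7 = 0 := rfl
@[simp] lemma bV_mk_3_7 (h : 3 < 8) : bV ⟨3,h⟩ 7 = 0 := rfl
@[simp] lemma bV_mk2_3_7 (h : 3 < 8) (h' : 7 < 12) : bV ⟨3,h⟩ ⟨7,h'⟩ = 0 := rfl
@[simp] lemma bV_mk3_3_7 (h' : 7 < 12) : bV 3 ⟨7,h'⟩ = 0 := rfl
@[simp] lemma bV_3_8 : bV 3 8 = 0 := rfl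
@[simp] lemma bV_mk_3_8 (h : 3 < 8) : bV ⟨3,h⟩ 8 = 0 := rfl
@[simp] lemma bV_mk2_3_8 (h : 3 < 8) (h' : 8 < 12) : bV ⟨3,h⟩ ⟨8,h'⟩ = 0 := rfl
@[simp] lemma bV_mk3_3_8 (h' : 8 < 12) : bV 3 ⟨8,h'⟩ = 0 := rfl
@[simp] lemma bV_3_9 : bV 3 9 = 0 := rfl
@[simp] lemma bV_mk_3_9 (h : 3 < 8) : bV ⟨3,h⟩ 9 = 0 := rfl
@[simp] lemma bV_mk2_3_9 (h : 3 < 8) (h' : 9 < 12) : bV ⟨3,h⟩ ⟨9,h'⟩ = 0 := rfl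
@[simp] lemma bV_mk3_3_9 (h' : 9 < 12) : bV 3 ⟨9,h'⟩ = 0 := rfl
@[simp] lemma bV_3_10 : bV 3 10 = 0 := rfl
@[simp] lemma bV_mk_3_10 (h : 3 < 8) : bV ⟨3,h⟩ 10 = 0 := rfl
@[simp] lemma bV_mk2_3_10 (h : 3 < 8) (h' : 10 < 12) : bV ⟨3,h⟩ ⟨10,h'⟩ = 0 := rfl
@[simp] lemma bV_mk3_3_10 (h' : 10 < 12) : bV 3 ⟨10,h'⟩ = 0 := rfl
@[simp] lemma bV_3_11 : bV 3 11 = 0 := rfl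
@[simp] lemma bV_mk_3_11 (h : 3 < 8) : bV ⟨3,h⟩ 11 = 0 := rfl
@[simp] lemma bV_mk2_3_11 (h : 3 < 8) (h' : 11 < 12) : bV ⟨3,h⟩ ⟨11,h'⟩ = 0 := rfl
@[simp] lemma bV_mk3_3_11 (h' : 11 < 12) : bV 3 ⟨11,h'⟩ = 0 := rfl
@[simp] lemma bV_4_0 : bV 4 0 = 0 := rfl
@[simp] lemma bV_mk_4_0 (h : 4 < 8) : bV ⟨4,h⟩ 0 = 0 := rfl
@[simp] lemma bV_mk2_4_0 (h : 4 < 8) (h' : 0 < 12) : bV ⟨4,h⟩ ⟨0,h'⟩ = 0 := rfl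
@[simp] lemma bV_mk3_4_0 (h' : 0 < 12) : bV 4 ⟨0,h'⟩ = 0 := rfl
@[simp] lemma bV_4_1 : bV 4 1 = 0 := rfl
@[simp] lemma bV_mk_4_1 (h : 4 < 8) : bV ⟨4,h⟩ 1 = 0 := rfl
@[simp] lemma bV_mk2_4_1 (h : 4 < 8) (h' : 1 < 12) : bV ⟨4,h⟩ ⟨1,h'⟩ = 0 := rfl
@[simp] lemma bV_mk3_4_1 (h' : 1 < 12) : bV 4 ⟨1,h'⟩ = 0 := rfl
@[simp] lemma bV_4_2 : bV 4 2 = 0 := rfl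
@[simp] lemma bV_mk_4_2 (h : 4 < 8) : bV ⟨4,h⟩ 2 = 0 := rfl
@[simp] lemma bV_mk2_4_2 (h : 4 < 8) (h' : 2 < 12) : bV ⟨4,h⟩ ⟨2,h'⟩ = 0 := rfl
@[simp] lemma bV_mk3_4_2 (h' : 2 < 12) : bV 4 ⟨2,h'⟩ = 0 := rfl
@[simp] lemma bV_4_3 : bV 4 3 = 0 := rfl
@[simp] lemma bV_mk_4_3 (h : 4 < 8) : bV ⟨4,h⟩ 3 = 0 := rfl
@[simp] lemma bV_mk2_4_3 (h : 4 < 8) (h' : 3 < 12) : bV ⟨4,h⟩ ⟨3,h'⟩ = 0 := rfl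
@[simp] lemma bV_mk3_4_3 (h' : 3 < 12) : bV 4 ⟨3,h'⟩ = 0 := rfl
@[simp] lemma bV_4_4 : bV 4 4 = 0 := rfl
@[simp] lemma bV_mk_4_4 (h : 4 < 8) : bV ⟨4,h⟩ 4 = 0 := rfl
@[simp] lemma bV_mk2_4_4 (h : 4 < 8) (h' : 4 < 12) : bV ⟨4,h⟩ ⟨4,h'⟩ = 0 := rfl
@[simp] lemma bV_mk3_4_4 (h' : 4 < 12) : bV 4 ⟨4,h'⟩ = 0 := rfl
@[simp] lemma bV_4_5 : bV 4 5 = 0 := rfl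
@[simp] lemma bV_mk_4_5 (h : 4 < 8) : bV ⟨4,h⟩ 5 = 0 := rfl
@[simp] lemma bV_mk2_4_5 (h : 4 < 8) (h' : 5 < 12) : bV ⟨4,h⟩ ⟨5,h'⟩ = 0 := rfl
@[simp] lemma bV_mk3_4_5 (h' : 5 < 12) : bV 4 ⟨5,h'⟩ = 0 := rfl
@[simp] lemma bV_4_6 : bV 4 6 = 0 := rfl
@[simp] lemma bV_mk_4_6 (h : 4 < 8) : bV ⟨4,h⟩ 6 = 0 := rfl
@[simp] lemma bV_mk2_4_6 (h : 4 < 8) (h' : 6 < 12) : bV ⟨4,h⟩ ⟨6,h'⟩ = 0 := rfl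
@[simp] lemma bV_mk3_4_6 (h' : 6 < 12) : bV 4 ⟨6,h'⟩ = 0 := rfl
@[simp] lemma bV_4_7 : bV 4 7 = 1 := rfl
@[simp] lemma bV_mk_4_7 (h : 4 < 8) : bV ⟨4,h⟩ 7 = 1 := rfl
@[simp] lemma bV_mk2_4_7 (h : 4 < 8) (h' : 7 < 12) : bV ⟨4,h⟩ ⟨7,h'⟩ = 1 := rfl
@[simp] lemma bV_mk3_4_7 (h' : 7 < 12) : bV 4 ⟨7,h'⟩ = 1 := rfl
@[simp] lemma bV_4_8 : bV 4 8 = 1 := rfl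
@[simp] lemma bV_mk_4_8 (h : 4 < 8) : bV ⟨4,h⟩ 8 = 1 := rfl
@[simp] lemma bV_mk2_4_8 (h : 4 < 8) (h' : 8 < 12) : bV ⟨4,h⟩ ⟨8,h'⟩ = 1 := rfl
@[simp] lemma bV_mk3_4_8 (h' : 8 < 12) : bV 4 ⟨8,h'⟩ = 1 := rfl
@[simp] lemma bV_4_9 : bV 4 9 = (-1) := rfl
@[simp] lemma bV_mk_4_9 (h : 4 < 8) : bV ⟨4,h⟩ 9 = (-1) := rfl
@[simp] lemma bV_mk2_4_9 (h : 4 < 8) (h' : 9 < 12) : bV ⟨4,h⟩ ⟨9,h'⟩ = (-1) := rfl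
@[simp] lemma bV_mk3_4_9 (h' : 9 < 12) : bV 4 ⟨9,h'⟩ = (-1) := rfl
@[simp] lemma bV_4_10 : bV 4 10 = 0 := rfl
@[simp] lemma bV_mk_4_10 (h : 4 < 8) : bV ⟨4,h⟩ 10 = 0 := rfl
@[simp] lemma bV_mk2_4_10 (h : 4 < 8) (h' : 10 < 12) : bV ⟨4,h⟩ ⟨10,h'⟩ = 0 := rfl
@[simp] lemma bV_mk3_4_10 (h' : 10 < 12) : bV 4 ⟨10,h'⟩ = 0 := rfl
@[simp] lemma bV_4_11 : bV 4 11 = 0 := rfl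
@[simp] lemma bV_mk_4_11 (h : 4 < 8) : bV ⟨4,h⟩ 11 = 0 := rfl
@[simp] lemma bV_mk2_4_11 (h : 4 < 8) (h' : 11 < 12) : bV ⟨4,h⟩ ⟨11,h'⟩ = 0 := rfl
@[simp] lemma bV_mk3_4_11 (h' : 11 < 12) : bV 4 ⟨11,h'⟩ = 0 := rfl
@[simp] lemma bV_5_0 : bV 5 0 = 0 := rfl
@[simp] lemma bV_mk_5_0 (h : 5 < 8) : bV ⟨5,h⟩ 0 = 0 := rfl
@[simp] lemma bV_mk2_5_0 (h : 5 < 8) (h' : 0 < 12) : bV ⟨5,h⟩ ⟨0,h'⟩ = 0 := rfl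
@[simp] lemma bV_mk3_5_0 (h' : 0 < 12) : bV 5 ⟨0,h'⟩ = 0 := rfl
@[simp] lemma bV_5_1 : bV 5 1 = 0 := rfl
@[simp] lemma bV_mk_5_1 (h : 5 < 8) : bV ⟨5,h⟩ 1 = 0 := rfl
@[simp] lemma bV_mk2_5_1 (h : 5 < 8) (h' : 1 < 12) : bV ⟨5,h⟩ ⟨1,h'⟩ = 0 := rfl
@[simp] lemma bV_mk3_5_1 (h' : 1 < 12) : bV 5 ⟨1,h'⟩ = 0 := rfl
@[simp] lemma bV_5_2 : bV 5 2 = 0 := rfl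
@[simp] lemma bV_mk_5_2 (h : 5 < 8) : bV ⟨5,h⟩ 2 = 0 := rfl
@[simp] lemma bV_mk2_5_2 (h : 5 < 8) (h' : 2 < 12) : bV ⟨5,h⟩ ⟨2,h'⟩ = 0 := rfl
@[simp] lemma bV_mk3_5_2 (h' : 2 < 12) : bV 5 ⟨2,h'⟩ = 0 := rfl
@[simp] lemma bV_5_3 : bV 5 3 = 0 := rfl
@[simp] lemma bV_mk_5_3 (h : 5 < 8) : bV ⟨5,h⟩ 3 = 0 := rfl
@[simp] lemma bV_mk2_5_3 (h : 5 < 8) (h' : 3 < 12) : bV ⟨5,h⟩ ⟨3,h'⟩ = 0 := rfl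
@[simp] lemma bV_mk3_5_3 (h' : 3 < 12) : bV 5 ⟨3,h'⟩ = 0 := rfl
@[simp] lemma bV_5_4 : bV 5 4 = 0 := rfl
@[simp] lemma bV_mk_5_4 (h : 5 < 8) : bV ⟨5,h⟩ 4 = 0 := rfl
@[simp] lemma bV_mk2_5_4 (h : 5 < 8) (h' : 4 < 12) : bV ⟨5,h⟩ ⟨4,h'⟩ = 0 := rfl
@[simp] lemma bV_mk3_5_4 (h' : 4 < 12) : bV 5 ⟨4,h'⟩ = 0 := rfl
@[simp] lemma bV_5_5 : bV 5 5 = 0 := rfl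
@[simp] lemma bV_mk_5_5 (h : 5 < 8) : bV ⟨5,h⟩ 5 = 0 := rfl
@[simp] lemma bV_mk2_5_5 (h : 5 < 8) (h' : 5 < 12) : bV ⟨5,h⟩ ⟨5,h'⟩ = 0 := rfl
@[simp] lemma bV_mk3_5_5 (h' : 5 < 12) : bV 5 ⟨5,h'⟩ = 0 := rfl
@[simp] lemma bV_5_6 : bV 5 6 = 0 := rfl
@[simp] lemma bV_mk_5_6 (h : 5 < 8) : bV ⟨5,h⟩ 6 = 0 := rfl
@[simp] lemma bV_mk2_5_6 (h : 5 < 8) (h' : 6 < 12) : bV ⟨5,h⟩ ⟨6,h'⟩ = 0 := rfl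
@[simp] lemma bV_mk3_5_6 (h' : 6 < 12) : bV 5 ⟨6,h'⟩ = 0 := rfl
@[simp] lemma bV_5_7 : bV 5 7 = 0 := rfl
@[simp] lemma bV_mk_5_7 (h : 5 < 8) : bV ⟨5,h⟩ 7 = 0 := rfl
@[simp] lemma bV_mk2_5_7 (h : 5 < 8) (h' : 7 < 12) : bV ⟨5,h⟩ ⟨7,h'⟩ = 0 := rfl
@[simp] lemma bV_mk3_5_7 (h' : 7 < 12) : bV 5 ⟨7,h'⟩ = 0 := rfl
@[simp] lemma bV_5_8 : bV 5 8 = 0 := rfl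
@[simp] lemma bV_mk_5_8 (h : 5 < 8) : bV ⟨5,h⟩ 8 = 0 := rfl
@[simp] lemma bV_mk2_5_8 (h : 5 < 8) (h' : 8 < 12) : bV ⟨5,h⟩ ⟨8,h'⟩ = 0 := rfl
@[simp] lemma bV_mk3_5_8 (h' : 8 < 12) : bV 5 ⟨8,h'⟩ = 0 := rfl
@[simp] lemma bV_5_9 : bV 5 9 = 1 := rfl
@[simp] lemma bV_mk_5_9 (h : 5 < 8) : bV ⟨5,h⟩ 9 = 1 := rfl
@[simp] lemma bV_mk2_5_9 (h : 5 < 8) (h' : 9 < 12) : bV ⟨5,h⟩ ⟨9,h'⟩ = 1 := rfl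
@[simp] lemma bV_mk3_5_9 (h' : 9 < 12) : bV 5 ⟨9,h'⟩ = 1 := rfl
@[simp] lemma bV_5_10 : bV 5 10 = (-1) := rfl
@[simp] lemma bV_mk_5_10 (h : 5 < 8) : bV ⟨5,h⟩ 10 = (-1) := rfl
@[simp] lemma bV_mk2_5_10 (h : 5 < 8) (h' : 10 < 12) : bV ⟨5,h⟩ ⟨10,h'⟩ = (-1) := rfl
@[simp] lemma bV_mk3_5_10 (h' : 10 < 12) : bV 5 ⟨10,h'⟩ = (-1) := rfl
@[simp] lemma bV_5_11 : bV 5 11 = 0 := rfl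
@[simp] lemma bV_mk_5_11 (h : 5 < 8) : bV ⟨5,h⟩ 11 = 0 := rfl
@[simp] lemma bV_mk2_5_11 (h : 5 < 8) (h' : 11 < 12) : bV ⟨5,h⟩ ⟨11,h'⟩ = 0 := rfl
@[simp] lemma bV_mk3_5_11 (h' : 11 < 12) : bV 5 ⟨11,h'⟩ = 0 := rfl
@[simp] lemma bV_6_0 : bV 6 0 = 1 := rfl
@[simp] lemma bV_mk_6_0 (h : 6 < 8) : bV ⟨6,h⟩ 0 = 1 := rfl
@[simp] lemma bV_mk2_6_0 (h : 6 < 8) (h' : 0 < 12) : bV ⟨6,h⟩ ⟨0,h'⟩ = 1 := rfl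
@[simp] lemma bV_mk3_6_0 (h' : 0 < 12) : bV 6 ⟨0,h'⟩ = 1 := rfl
@[simp] lemma bV_6_1 : bV 6 1 = 0 := rfl
@[simp] lemma bV_mk_6_1 (h : 6 < 8) : bV ⟨6,h⟩ 1 = 0 := rfl
@[simp] lemma bV_mk2_6_1 (h : 6 < 8) (h' : 1 < 12) : bV ⟨6,h⟩ ⟨1,h'⟩ = 0 := rfl
@[simp] lemma bV_mk3_6_1 (h' : 1 < 12) : bV 6 ⟨1,h'⟩ = 0 := rfl
@[simp] lemma bV_6_2 : bV 6 2 = 0 := rfl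
@[simp] lemma bV_mk_6_2 (h : 6 < 8) : bV ⟨6,h⟩ 2 = 0 := rfl
@[simp] lemma bV_mk2_6_2 (h : 6 < 8) (h' : 2 < 12) : bV ⟨6,h⟩ ⟨2,h'⟩ = 0 := rfl
@[simp] lemma bV_mk3_6_2 (h' : 2 < 12) : bV 6 ⟨2,h'⟩ = 0 := rfl
@[simp] lemma bV_6_3 : bV 6 3 = (-1) := rfl
@[simp] lemma bV_mk_6_3 (h : 6 < 8) : bV ⟨6,h⟩ 3 = (-1) := rfl
@[simp] lemma bV_mk2_6_3 (h : 6 < 8) (h' : 3 < 12) : bV ⟨6,h⟩ ⟨3,h'⟩ = (-1) := rfl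
@[simp] lemma bV_mk3_6_3 (h' : 3 < 12) : bV 6 ⟨3,h'⟩ = (-1) := rfl
@[simp] lemma bV_6_4 : bV 6 4 = (-1) := rfl
@[simp] lemma bV_mk_6_4 (h : 6 < 8) : bV ⟨6,h⟩ 4 = (-1) := rfl
@[simp] lemma bV_mk2_6_4 (h : 6 < 8) (h' : 4 < 12) : bV ⟨6,h⟩ ⟨4,h'⟩ = (-1) := rfl
@[simp] lemma bV_mk3_6_4 (h' : 4 < 12) : bV 6 ⟨4,h'⟩ = (-1) := rfl
@[simp] lemma bV_6_5 : bV 6 5 = 0 := rfl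
@[simp] lemma bV_mk_6_5 (h : 6 < 8) : bV ⟨6,h⟩ 5 = 0 := rfl
@[simp] lemma bV_mk2_6_5 (h : 6 < 8) (h' : 5 < 12) : bV ⟨6,h⟩ ⟨5,h'⟩ = 0 := rfl
@[simp] lemma bV_mk3_6_5 (h' : 5 < 12) : bV 6 ⟨5,h'⟩ = 0 := rfl
@[simp] lemma bV_6_6 : bV 6 6 = 0 := rfl
@[simp] lemma bV_mk_6_6 (h : 6 < 8) : bV ⟨6,h⟩ 6 = 0 := rfl
@[simp] lemma bV_mk2_6_6 (h : 6 < 8) (h' : 6 < 12) : bV ⟨6,h⟩ ⟨6,h'⟩ = 0 := rfl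
@[simp] lemma bV_mk3_6_6 (h' : 6 < 12) : bV 6 ⟨6,h'⟩ = 0 := rfl
@[simp] lemma bV_6_7 : bV 6 7 = 1 := rfl
@[simp] lemma bV_mk_6_7 (h : 6 < 8) : bV ⟨6,h⟩ 7 = 1 := rfl
@[simp] lemma bV_mk2_6_7 (h : 6 < 8) (h' : 7 < 12) : bV ⟨6,h⟩ ⟨7,h'⟩ = 1 := rfl
@[simp] lemma bV_mk3_6_7 (h' : 7 < 12) : bV 6 ⟨7,h'⟩ = 1 := rfl
@[simp] lemma bV_6_8 : bV 6 8 = 0 := rfl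
@[simp] lemma bV_mk_6_8 (h : 6 < 8) : bV ⟨6,h⟩ 8 = 0 := rfl
@[simp] lemma bV_mk2_6_8 (h : 6 < 8) (h' : 8 < 12) : bV ⟨6,h⟩ ⟨8,h'⟩ = 0 := rfl
@[simp] lemma bV_mk3_6_8 (h' : 8 < 12) : bV 6 ⟨8,h'⟩ = 0 := rfl
@[simp] lemma bV_6_9 : bV 6 9 = 0 := rfl
@[simp] lemma bV_mk_6_9 (h : 6 < 8) : bV ⟨6,h⟩ 9 = 0 := rfl
@[simp] lemma bV_mk2_6_9 (h : 6 < 8) (h' : 9 < 12) : bV ⟨6,h⟩ ⟨9,h'⟩ = 0 := rfl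
@[simp] lemma bV_mk3_6_9 (h' : 9 < 12) : bV 6 ⟨9,h'⟩ = 0 := rfl
@[simp] lemma bV_6_10 : bV 6 10 = 0 := rfl
@[simp] lemma bV_mk_6_10 (h : 6 < 8) : bV ⟨6,h⟩ 10 = 0 := rfl
@[simp] lemma bV_mk2_6_10 (h : 6 < 8) (h' : 10 < 12) : bV ⟨6,h⟩ ⟨10,h'⟩ = 0 := rfl
@[simp] lemma bV_mk3_6_10 (h' : 10 < 12) : bV 6 ⟨10,h'⟩ = 0 := rfl
@[simp] lemma bV_6_11 : bV 6 11 = 0 := rfl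
@[simp] lemma bV_mk_6_11 (h : 6 < 8) : bV ⟨6,h⟩ 11 = 0 := rfl
@[simp] lemma bV_mk2_6_11 (h : 6 < 8) (h' : 11 < 12) : bV ⟨6,h⟩ ⟨11,h'⟩ = 0 := rfl
@[simp] lemma bV_mk3_6_11 (h' : 11 < 12) : bV 6 ⟨11,h'⟩ = 0 := rfl
@[simp] lemma bV_7_0 : bV 7 0 = 0 := rfl
@[simp] lemma bV_mk_7_0 (h : 7 < 8) : bV ⟨7,h⟩ 0 = 0 := rfl
@[simp] lemma bV_mk2_7_0 (h : 7 < 8) (h' : 0 < 12) : bV ⟨7,h⟩ ⟨0,h'⟩ = 0 := rfl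
@[simp] lemma bV_mk3_7_0 (h' : 0 < 12) : bV 7 ⟨0,h'⟩ = 0 := rfl
@[simp] lemma bV_7_1 : bV 7 1 = 0 := rfl
@[simp] lemma bV_mk_7_1 (h : 7 < 8) : bV ⟨7,h⟩ 1 = 0 := rfl
@[simp] lemma bV_mk2_7_1 (h : 7 < 8) (h' : 1 < 12) : bV ⟨7,h⟩ ⟨1,h'⟩ = 0 := rfl
@[simp] lemma bV_mk3_7_1 (h' : 1 < 12) : bV 7 ⟨1,h'⟩ = 0 := rfl
@[simp] lemma bV_7_2 : bV 7 2 = 0 := rfl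
@[simp] lemma bV_mk_7_2 (h : 7 < 8) : bV ⟨7,h⟩ 2 = 0 := rfl
@[simp] lemma bV_mk2_7_2 (h : 7 < 8) (h' : 2 < 12) : bV ⟨7,h⟩ ⟨2,h'⟩ = 0 := rfl
@[simp] lemma bV_mk3_7_2 (h' : 2 < 12) : bV 7 ⟨2,h'⟩ = 0 := rfl
@[simp] lemma bV_7_3 : bV 7 3 = 0 := rfl
@[simp] lemma bV_mk_7_3 (h : 7 < 8) : bV ⟨7,h⟩ 3 = 0 := rfl
@[simp] lemma bV_mk2_7_3 (h : 7 < 8) (h' : 3 < 12) : bV ⟨7,h⟩ ⟨3,h'⟩ = 0 := rfl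
@[simp] lemma bV_mk3_7_3 (h' : 3 < 12) : bV 7 ⟨3,h'⟩ = 0 := rfl
@[simp] lemma bV_7_4 : bV 7 4 = 1 := rfl
@[simp] lemma bV_mk_7_4 (h : 7 < 8) : bV ⟨7,h⟩ 4 = 1 := rfl
@[simp] lemma bV_mk2_7_4 (h : 7 < 8) (h' : 4 < 12) : bV ⟨7,h⟩ ⟨4,h'⟩ = 1 := rfl
@[simp] lemma bV_mk3_7_4 (h' : 4 < 12) : bV 7 ⟨4,h'⟩ = 1 := rfl
@[simp] lemma bV_7_5 : bV 7 5 = 0 := rfl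
@[simp] lemma bV_mk_7_5 (h : 7 < 8) : bV ⟨7,h⟩ 5 = 0 := rfl
@[simp] lemma bV_mk2_7_5 (h : 7 < 8) (h' : 5 < 12) : bV ⟨7,h⟩ ⟨5,h'⟩ = 0 := rfl
@[simp] lemma bV_mk3_7_5 (h' : 5 < 12) : bV 7 ⟨5,h'⟩ = 0 := rfl
@[simp] lemma bV_7_6 : bV 7 6 = 0 := rfl
@[simp] lemma bV_mk_7_6 (h : 7 < 8) : bV ⟨7,h⟩ 6 = 0 := rfl
@[simp] lemma bV_mk2_7_6 (h : 7 < 8) (h' : 6 < 12) : bV ⟨7,h⟩ ⟨6,h'⟩ = 0 := rfl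
@[simp] lemma bV_mk3_7_6 (h' : 6 < 12) : bV 7 ⟨6,h'⟩ = 0 := rfl
@[simp] lemma bV_7_7 : bV 7 7 = (-1) := rfl
@[simp] lemma bV_mk_7_7 (h : 7 < 8) : bV ⟨7,h⟩ 7 = (-1) := rfl
@[simp] lemma bV_mk2_7_7 (h : 7 < 8) (h' : 7 < 12) : bV ⟨7,h⟩ ⟨7,h'⟩ = (-1) := rfl
@[simp] lemma bV_mk3_7_7 (h' : 7 < 12) : bV 7 ⟨7,h'⟩ = (-1) := rfl
@[simp] lemma bV_7_8 : bV 7 8 = (-1) := rfl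
@[simp] lemma bV_mk_7_8 (h : 7 < 8) : bV ⟨7,h⟩ 8 = (-1) := rfl
@[simp] lemma bV_mk2_7_8 (h : 7 < 8) (h' : 8 < 12) : bV ⟨7,h⟩ ⟨8,h'⟩ = (-1) := rfl
@[simp] lemma bV_mk3_7_8 (h' : 8 < 12) : bV 7 ⟨8,h'⟩ = (-1) := rfl
@[simp] lemma bV_7_9 : bV 7 9 = 0 := rfl
@[simp] lemma bV_mk_7_9 (h : 7 < 8) : bV ⟨7,h⟩ 9 = 0 := rfl
@[simp] lemma bV_mk2_7_9 (h : 7 < 8) (h' : 9 < 12) : bV ⟨7,h⟩ ⟨9,h'⟩ = 0 := rfl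
@[simp] lemma bV_mk3_7_9 (h' : 9 < 12) : bV 7 ⟨9,h'⟩ = 0 := rfl
@[simp] lemma bV_7_10 : bV 7 10 = 0 := rfl
@[simp] lemma bV_mk_7_10 (h : 7 < 8) : bV ⟨7,h⟩ 10 = 0 := rfl
@[simp] lemma bV_mk2_7_10 (h : 7 < 8) (h' : 10 < 12) : bV ⟨7,h⟩ ⟨10,h'⟩ = 0 := rfl
@[simp] lemma bV_mk3_7_10 (h' : 10 < 12) : bV 7 ⟨10,h'⟩ = 0 := rfl
@[simp] lemma bV_7_11 : bV 7 11 = 1 := rfl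
@[simp] lemma bV_mk_7_11 (h : 7 < 8) : bV ⟨7,h⟩ 11 = 1 := rfl
@[simp] lemma bV_mk2_7_11 (h : 7 < 8) (h' : 11 < 12) : bV ⟨7,h⟩ ⟨11,h'⟩ = 1 := rfl
@[simp] lemma bV_mk3_7_11 (h' : 11 < 12) : bV 7 ⟨11,h'⟩ = 1 := rfl

lemma bV_linearIndependent : LinearIndependent ℝ bV := by
  rw [Fintype.linearIndependent_iff]
  intro g hg
  have e0 := congrFun hg 0
  have e1 := congrFun hg 1
  have e2 := congrFun hg 2
  have e5 := congrFun hg 5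
  have e6 := congrFun hg 6
  have e8 := congrFun hg 8
  have e9 := congrFun hg 9
  have e10 := congrFun hg 10
  simp [Finset.sum_apply, Fin.sum_univ_eight] at e0 e1 e2 e5 e6 e8 e9 e10
  intro i
  fin_cases i <;> simp <;> linarith

lemma center_mem : (fun _ => (1/3 : ℝ)) ∈ burniatPolytope := by
  refine ⟨fun i => by norm_num, by norm_num, by norm_num, by norm_num, by norm_num⟩

lemma pt_mem (k : Fin 8) :
    (fun i => 1/3 + (1/12) * bV k i) ∈ burniatPolytope := by
  fin_cases k <;>
    refine ⟨fun i => ?_, by norm_num, by norm_num, by norm_num,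
      by norm_num⟩ <;>
    fin_cases i <;> norm_num

lemma vectorSpan_eq : vectorSpan ℝ burniatPolytope = Submodule.span ℝ (Set.range bV) := by
  apply le_antisymm
  · rw [vectorSpan_def]
    refine Submodule.span_le.2 ?_
    rintro w ⟨x, hx, y, hy, rfl⟩
    obtain ⟨-, hxs, hx3, hx7, hx11⟩ := hx
    obtain ⟨-, hys, hy3, hy7, hy11⟩ := hy
    have hdecomp : x -ᵥ y =
        (-(x 1 - y 1) - (x 2 - y 2)) • bV 0 + (-(x 2 - y 2)) • bV 1 +
        (-(x 5 - y 5) - (x 6 - y 6)) • bV 2 + (-(x 6 - y 6)) • bV 3 +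
        (-(x 9 - y 9) - (x 10 - y 10)) • bV 4 + (-(x 10 - y 10)) • bV 5 +
        ((x 0 - y 0) + (x 1 - y 1) + (x 2 - y 2)) • bV 6 +
        (-(x 8 - y 8) - (x 9 - y 9) - (x 10 - y 10)) • bV 7 := by
      have ecases : ∀ j : Fin 12, j = 0 ∨ j = 1 ∨ j = 2 ∨ j = 3 ∨ j = 4 ∨ j = 5 ∨
          j = 6 ∨ j = 7 ∨ j = 8 ∨ j = 9 ∨ j = 10 ∨ j = 11 := by decide
      funext j
      rcases ecases j with h|h|h|h|h|h|h|h|h|h|h|h <;> subst h <;>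
        simp only [Pi.add_apply, Pi.smul_apply, Pi.sub_apply, vsub_eq_sub, smul_eq_mul,
          bV_0_0, bV_1_0, bV_2_0, bV_3_0, bV_4_0, bV_5_0, bV_6_0, bV_7_0,
          bV_0_1, bV_1_1, bV_2_1, bV_3_1, bV_4_1, bV_5_1, bV_6_1, bV_7_1,
          bV_0_2, bV_1_2, bV_2_2, bV_3_2, bV_4_2, bV_5_2, bV_6_2, bV_7_2,
          bV_0_3, bV_1_3, bV_2_3, bV_3_3, bV_4_3, bV_5_3, bV_6_3, bV_7_3,
          bV_0_4, bV_1_4, bV_2_4, bV_3_4, bV_4_4, bV_5_4, bV_6_4, bV_7_4,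
          bV_0_5, bV_1_5, bV_2_5, bV_3_5, bV_4_5, bV_5_5, bV_6_5, bV_7_5,
          bV_0_6, bV_1_6, bV_2_6, bV_3_6, bV_4_6, bV_5_6, bV_6_6, bV_7_6,
          bV_0_7, bV_1_7, bV_2_7, bV_3_7, bV_4_7, bV_5_7, bV_6_7, bV_7_7,
          bV_0_8, bV_1_8, bV_2_8, bV_3_8, bV_4_8, bV_5_8, bV_6_8, bV_7_8,
          bV_0_9, bV_1_9, bV_2_9, bV_3_9, bV_4_9, bV_5_9, bV_6_9, bV_7_9,
          bV_0_10, bV_1_10, bV_2_10, bV_3_10, bV_4_10, bV_5_10, bV_6_10, bV_7_10,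
          bV_0_11, bV_1_11, bV_2_11, bV_3_11, bV_4_11, bV_5_11, bV_6_11, bV_7_11] <;>
        ring_nf <;> linarith
    show x -ᵥ y ∈ (Submodule.span ℝ (Set.range bV) : Set (Fin 12 → ℝ))
    rw [hdecomp]
    have hmem : ∀ k : Fin 8, bV k ∈ Submodule.span ℝ (Set.range bV) :=
      fun k => Submodule.subset_span ⟨k, rfl⟩
    exact Submodule.add_mem _ (Submodule.add_mem _ (Submodule.add_mem _ (Submodule.add_mem _
      (Submodule.add_mem _ (Submodule.add_mem _ (Submodule.add_mem _
        (Submodule.smul_mem _ _ (hmem 0)) (Submodule.smul_mem _ _ (hmem 1)))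
        (Submodule.smul_mem _ _ (hmem 2))) (Submodule.smul_mem _ _ (hmem 3)))
        (Submodule.smul_mem _ _ (hmem 4))) (Submodule.smul_mem _ _ (hmem 5)))
        (Submodule.smul_mem _ _ (hmem 6))) (Submodule.smul_mem _ _ (hmem 7))
  · refine Submodule.span_le.2 ?_
    rintro w ⟨k, rfl⟩
    have h : bV k = (12 : ℝ) •
        ((fun i => 1/3 + (1/12) * bV k i) -ᵥ (fun _ => (1/3 : ℝ)) : Fin 12 → ℝ) := by
      funext i
      show bV k i = 12 * ((1/3 + 1/12 * bV k i) - 1/3)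
      ring
    rw [h]
    exact Submodule.smul_mem _ _ (vsub_mem_vectorSpan ℝ (pt_mem k) center_mem)

/-- The Burniat polytope is a nonempty compact convex subset of `ℝ^12`
whose affine dimension (the dimension of the vector span of differences of its
points) equals 8. -/
theorem burniatPolytope_nonempty_compact_convex_dim_eight :
    burniatPolytope.Nonempty ∧ IsCompact burniatPolytope ∧
    Convex ℝ burniatPolytope ∧
    Module.finrank ℝ (vectorSpan ℝ burniatPolytope) = 8 := by
  have hclosed : IsClosed burniatPolytope := by
    have h1 : IsClosed {x : Fin 12 → ℝ | ∀ i, 0 ≤ x i ∧ x i ≤ 1/2} := by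
      have : {x : Fin 12 → ℝ | ∀ i, 0 ≤ x i ∧ x i ≤ 1/2} =
          Set.pi Set.univ (fun _ => Set.Icc 0 (1/2)) := by
        ext x; simp [Set.mem_pi, Set.mem_Icc, Pi.le_def, forall_and]
      rw [this]
      exact isClosed_set_pi fun i _ => isClosed_Icc
    have h2 : IsClosed {x : Fin 12 → ℝ |
        (x 0 + x 4 + x 8) + (x 1 + x 5 + x 9) + (x 2 + x 6 + x 10) = 3} :=
      isClosed_eq (by fun_prop) (by fun_prop)
    have h3 : IsClosed {x : Fin 12 → ℝ | x 3 = x 8 + x 9 + x 10 + x 4 - 1} :=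
      isClosed_eq (by fun_prop) (by fun_prop)
    have h4 : IsClosed {x : Fin 12 → ℝ | x 7 = x 0 + x 1 + x 2 + x 8 - 1} :=
      isClosed_eq (by fun_prop) (by fun_prop)
    have h5 : IsClosed {x : Fin 12 → ℝ | x 11 = x 4 + x 5 + x 6 + x 0 - 1} :=
      isClosed_eq (by fun_prop) (by fun_prop)
    exact (h1.inter (h2.inter (h3.inter (h4.inter h5)) : IsClosed _) : IsClosed _)
  refine ⟨⟨_, center_mem⟩, ?_, ?_, ?_⟩
  · refine IsCompact.of_isClosed_subset
      (isCompact_univ_pi fun i : Fin 12 => (isCompact_Icc : IsCompact (Set.Icc (0:ℝ) (1/2))))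
      hclosed ?_
    intro x hx
    simp only [Set.mem_univ_pi, Set.mem_Icc]
    exact hx.1
  · rintro x hx y hy a b ha hb hab
    obtain ⟨hxi, hxs, hx3, hx7, hx11⟩ := hx
    obtain ⟨hyi, hys, hy3, hy7, hy11⟩ := hy
    refine ⟨fun i => ?_, ?_, ?_, ?_, ?_⟩
    · simp only [Pi.add_apply, Pi.smul_apply, smul_eq_mul]
      constructor
      · have := (hxi i).1; have := (hyi i).1
        nlinarith
      · have := (hxi i).2; have := (hyi i).2
        nlinarith
    all_goals simp only [Pi.add_apply, Pi.smul_apply, smul_eq_mul]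
    · linear_combination a * hxs + b * hys + 3 * hab
    · linear_combination a * hx3 + b * hy3 - hab
    · linear_combination a * hx7 + b * hy7 - hab
    · linear_combination a * hx11 + b * hy11 - hab
  · rw [vectorSpan_eq, finrank_span_eq_card bV_linearIndependent]
    simp
end

section
/- The subset of the Burniat polytope Δ_bur cut out by the two inequalities a_0+a_1+a_2 ≤ 1 and c_3+a_1+a_2 ≤ 1 (row 1 of the table of maximal-dimensional matroid-polytope intersections) has affine dimension 8, i.e., it is a full-dimensional subpolytope of Δ_bur; equivalently, Δ_bur contains a point satisfying all twelve inequality constraints 0 < a_i,b_i,c_i < 1/2 strictly together with a_0+a_1+a_2 < 1 and c_3+a_1+a_2 < 1. -/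
@[simp] theorem ev12_0 {α : Type*} (a0 a1 a2 a3 a4 a5 a6 a7 a8 a9 a10 a11 : α) : (![a0, a1, a2, a3, a4, a5, a6, a7, a8, a9, a10, a11]) (0 : Fin 12) = a0 := rfl
@[simp] theorem ev12_1 {α : Type*} (a0 a1 a2 a3 a4 a5 a6 a7 a8 a9 a10 a11 : α) : (![a0, a1, a2, a3, a4, a5, a6, a7, a8, a9, a10, a11]) (1 : Fin 12) = a1 := rfl
@[simp] theorem ev12_2 {α : Type*} (a0 a1 a2 a3 a4 a5 a6 a7 a8 a9 a10 a11 : α) : (![a0, a1, a2, a3, a4, a5, a6, a7, a8, a9, a10, a11]) (2 : Fin 12) = a2 := rfl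
@[simp] theorem ev12_3 {α : Type*} (a0 a1 a2 a3 a4 a5 a6 a7 a8 a9 a10 a11 : α) : (![a0, a1, a2, a3, a4, a5, a6, a7, a8, a9, a10, a11]) (3 : Fin 12) = a3 := rfl
@[simp] theorem ev12_4 {α : Type*} (a0 a1 a2 a3 a4 a5 a6 a7 a8 a9 a10 a11 : α) : (![a0, a1, a2, a3, a4, a5, a6, a7, a8, a9, a10, a11]) (4 : Fin 12) = a4 := rfl
@[simp] theorem ev12_5 {α : Type*} (a0 a1 a2 a3 a4 a5 a6 a7 a8 a9 a10 a11 : α) : (![a0, a1, a2, a3, a4, a5, a6, a7, a8, a9, a10, a11]) (5 : Fin 12) = a5 := rfl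
@[simp] theorem ev12_6 {α : Type*} (a0 a1 a2 a3 a4 a5 a6 a7 a8 a9 a10 a11 : α) : (![a0, a1, a2, a3, a4, a5, a6, a7, a8, a9, a10, a11]) (6 : Fin 12) = a6 := rfl
@[simp] theorem ev12_7 {α : Type*} (a0 a1 a2 a3 a4 a5 a6 a7 a8 a9 a10 a11 : α) : (![a0, a1, a2, a3, a4, a5, a6, a7, a8, a9, a10, a11]) (7 : Fin 12) = a7 := rfl
@[simp] theorem ev12_8 {α : Type*} (a0 a1 a2 a3 a4 a5 a6 a7 a8 a9 a10 a11 : α) : (![a0, a1, a2, a3, a4, a5, a6, a7, a8, a9, a10, a11]) (8 : Fin 12) = a8 := rfl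
@[simp] theorem ev12_9 {α : Type*} (a0 a1 a2 a3 a4 a5 a6 a7 a8 a9 a10 a11 : α) : (![a0, a1, a2, a3, a4, a5, a6, a7, a8, a9, a10, a11]) (9 : Fin 12) = a9 := rfl
@[simp] theorem ev12_10 {α : Type*} (a0 a1 a2 a3 a4 a5 a6 a7 a8 a9 a10 a11 : α) : (![a0, a1, a2, a3, a4, a5, a6, a7, a8, a9, a10, a11]) (10 : Fin 12) = a10 := rfl
@[simp] theorem ev12_11 {α : Type*} (a0 a1 a2 a3 a4 a5 a6 a7 a8 a9 a10 a11 : α) : (![a0, a1, a2, a3, a4, a5, a6, a7, a8, a9, a10, a11]) (11 : Fin 12) = a11 := rfl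
@[simp] theorem ev8_0 {α : Type*} (a0 a1 a2 a3 a4 a5 a6 a7 : α) : (![a0, a1, a2, a3, a4, a5, a6, a7]) (0 : Fin 8) = a0 := rfl
@[simp] theorem ev8_1 {α : Type*} (a0 a1 a2 a3 a4 a5 a6 a7 : α) : (![a0, a1, a2, a3, a4, a5, a6, a7]) (1 : Fin 8) = a1 := rfl
@[simp] theorem ev8_2 {α : Type*} (a0 a1 a2 a3 a4 a5 a6 a7 : α) : (![a0, a1, a2, a3, a4, a5, a6, a7]) (2 : Fin 8) = a2 := rfl
@[simp] theorem ev8_3 {α : Type*} (a0 a1 a2 a3 a4 a5 a6 a7 : α) : (![a0, a1, a2, a3, a4, a5, a6, a7]) (3 : Fin 8) = a3 := rfl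
@[simp] theorem ev8_4 {α : Type*} (a0 a1 a2 a3 a4 a5 a6 a7 : α) : (![a0, a1, a2, a3, a4, a5, a6, a7]) (4 : Fin 8) = a4 := rfl
@[simp] theorem ev8_5 {α : Type*} (a0 a1 a2 a3 a4 a5 a6 a7 : α) : (![a0, a1, a2, a3, a4, a5, a6, a7]) (5 : Fin 8) = a5 := rfl
@[simp] theorem ev8_6 {α : Type*} (a0 a1 a2 a3 a4 a5 a6 a7 : α) : (![a0, a1, a2, a3, a4, a5, a6, a7]) (6 : Fin 8) = a6 := rfl
@[simp] theorem ev8_7 {α : Type*} (a0 a1 a2 a3 a4 a5 a6 a7 : α) : (![a0, a1, a2, a3, a4, a5, a6, a7]) (7 : Fin 8) = a7 := rfl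
@[simp] theorem ev4_0 {α : Type*} (a0 a1 a2 a3 : α) : (![a0, a1, a2, a3]) (0 : Fin 4) = a0 := rfl
@[simp] theorem ev4_1 {α : Type*} (a0 a1 a2 a3 : α) : (![a0, a1, a2, a3]) (1 : Fin 4) = a1 := rfl
@[simp] theorem ev4_2 {α : Type*} (a0 a1 a2 a3 : α) : (![a0, a1, a2, a3]) (2 : Fin 4) = a2 := rfl
@[simp] theorem ev4_3 {α : Type*} (a0 a1 a2 a3 : α) : (![a0, a1, a2, a3]) (3 : Fin 4) = a3 := rfl

noncomputable def burP0 : Fin 12 → ℝ := ![3/10, 3/10, 3/10, 9/20, 1/4, 13/40, 13/40, 3/10, 2/5, 2/5, 2/5, 1/5]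
noncomputable def burP1 : Fin 12 → ℝ := ![31/100, 3/10, 3/10, 11/25, 1/4, 13/40, 13/40, 31/100, 2/5, 2/5, 39/100, 21/100]
noncomputable def burP2 : Fin 12 → ℝ := ![3/10, 31/100, 3/10, 11/25, 1/4, 13/40, 13/40, 31/100, 2/5, 2/5, 39/100, 1/5]
noncomputable def burP3 : Fin 12 → ℝ := ![3/10, 3/10, 31/100, 11/25, 1/4, 13/40, 13/40, 31/100, 2/5, 2/5, 39/100, 1/5]
noncomputable def burP4 : Fin 12 → ℝ := ![3/10, 3/10, 3/10, 9/20, 13/50, 13/40, 13/40, 3/10, 2/5, 2/5, 39/100, 21/100]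
noncomputable def burP5 : Fin 12 → ℝ := ![3/10, 3/10, 3/10, 11/25, 1/4, 67/200, 13/40, 3/10, 2/5, 2/5, 39/100, 21/100]
noncomputable def burP6 : Fin 12 → ℝ := ![3/10, 3/10, 3/10, 11/25, 1/4, 13/40, 67/200, 3/10, 2/5, 2/5, 39/100, 21/100]
noncomputable def burP7 : Fin 12 → ℝ := ![3/10, 3/10, 3/10, 9/20, 1/4, 13/40, 13/40, 31/100, 41/100, 2/5, 39/100, 1/5]
noncomputable def burP8 : Fin 12 → ℝ := ![3/10, 3/10, 3/10, 9/20, 1/4, 13/40, 13/40, 3/10, 2/5, 41/100, 39/100, 1/5]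

def burL : (Fin 12 → ℝ) →ₗ[ℝ] (Fin 4 → ℝ) where
  toFun x := ![x 0 + x 1 + x 2 + x 4 + x 5 + x 6 + x 8 + x 9 + x 10,
               x 3 - (x 8 + x 9 + x 10 + x 4),
               x 7 - (x 0 + x 1 + x 2 + x 8),
               x 11 - (x 4 + x 5 + x 6 + x 0)]
  map_add' x y := by funext j; fin_cases j <;> simp <;> ring
  map_smul' c x := by funext j; fin_cases j <;> simp <;> ring

lemma burL_surj : Function.Surjective burL := by
  intro y
  refine ⟨![0, y 0, 0, y 1, 0, 0, 0, y 2 + y 0, 0, 0, 0, y 3], ?_⟩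
  funext j; fin_cases j
  · show 0 + y 0 + 0 + 0 + 0 + 0 + 0 + 0 + 0 = y 0; ring
  · show y 1 - (0 + 0 + 0 + 0) = y 1; ring
  · show (y 2 + y 0) - (0 + y 0 + 0 + 0) = y 2; ring
  · show y 3 - (0 + 0 + 0 + 0) = y 3; ring

lemma burL_ker : Module.finrank ℝ (LinearMap.ker burL) = 8 := by
  have h := burL.finrank_range_add_finrank_ker
  rw [LinearMap.range_eq_top.mpr burL_surj] at h
  simp [Module.finrank_pi] at h
  omega

lemma burL_const {x : Fin 12 → ℝ} (hx : x ∈ burniatPolytope) :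
    burL x = ![3, -1, -1, -1] := by
  obtain ⟨-, h1, h2, h3, h4⟩ := hx
  funext j; fin_cases j
  · show x 0 + x 1 + x 2 + x 4 + x 5 + x 6 + x 8 + x 9 + x 10 = 3; linarith
  · show x 3 - (x 8 + x 9 + x 10 + x 4) = -1; linarith
  · show x 7 - (x 0 + x 1 + x 2 + x 8) = -1; linarith
  · show x 11 - (x 4 + x 5 + x 6 + x 0) = -1; linarith

lemma burP0_mem : burP0 ∈ {x ∈ burniatPolytope | x 0 + x 1 + x 2 ≤ 1 ∧ x 11 + x 1 + x 2 ≤ 1} := by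
  refine ⟨⟨fun i => ?_, by norm_num [burP0], by norm_num [burP0], by norm_num [burP0], by norm_num [burP0]⟩, by norm_num [burP0], by norm_num [burP0]⟩
  fin_cases i <;> norm_num [burP0]

lemma burP1_mem : burP1 ∈ {x ∈ burniatPolytope | x 0 + x 1 + x 2 ≤ 1 ∧ x 11 + x 1 + x 2 ≤ 1} := by
  refine ⟨⟨fun i => ?_, by norm_num [burP1], by norm_num [burP1], by norm_num [burP1], by norm_num [burP1]⟩, by norm_num [burP1], by norm_num [burP1]⟩
  fin_cases i <;> norm_num [burP1]

lemma burP2_mem : burP2 ∈ {x ∈ burniatPolytope | x 0 + x 1 + x 2 ≤ 1 ∧ x 11 + x 1 + x 2 ≤ 1} := by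
  refine ⟨⟨fun i => ?_, by norm_num [burP2], by norm_num [burP2], by norm_num [burP2], by norm_num [burP2]⟩, by norm_num [burP2], by norm_num [burP2]⟩
  fin_cases i <;> norm_num [burP2]

lemma burP3_mem : burP3 ∈ {x ∈ burniatPolytope | x 0 + x 1 + x 2 ≤ 1 ∧ x 11 + x 1 + x 2 ≤ 1} := by
  refine ⟨⟨fun i => ?_, by norm_num [burP3], by norm_num [burP3], by norm_num [burP3], by norm_num [burP3]⟩, by norm_num [burP3], by norm_num [burP3]⟩
  fin_cases i <;> norm_num [burP3]

lemma burP4_mem : burP4 ∈ {x ∈ burniatPolytope | x 0 + x 1 + x 2 ≤ 1 ∧ x 11 + x 1 + x 2 ≤ 1} := by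
  refine ⟨⟨fun i => ?_, by norm_num [burP4], by norm_num [burP4], by norm_num [burP4], by norm_num [burP4]⟩, by norm_num [burP4], by norm_num [burP4]⟩
  fin_cases i <;> norm_num [burP4]

lemma burP5_mem : burP5 ∈ {x ∈ burniatPolytope | x 0 + x 1 + x 2 ≤ 1 ∧ x 11 + x 1 + x 2 ≤ 1} := by
  refine ⟨⟨fun i => ?_, by norm_num [burP5], by norm_num [burP5], by norm_num [burP5], by norm_num [burP5]⟩, by norm_num [burP5], by norm_num [burP5]⟩
  fin_cases i <;> norm_num [burP5]

lemma burP6_mem : burP6 ∈ {x ∈ burniatPolytope | x 0 + x 1 + x 2 ≤ 1 ∧ x 11 + x 1 + x 2 ≤ 1} := by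
  refine ⟨⟨fun i => ?_, by norm_num [burP6], by norm_num [burP6], by norm_num [burP6], by norm_num [burP6]⟩, by norm_num [burP6], by norm_num [burP6]⟩
  fin_cases i <;> norm_num [burP6]

lemma burP7_mem : burP7 ∈ {x ∈ burniatPolytope | x 0 + x 1 + x 2 ≤ 1 ∧ x 11 + x 1 + x 2 ≤ 1} := by
  refine ⟨⟨fun i => ?_, by norm_num [burP7], by norm_num [burP7], by norm_num [burP7], by norm_num [burP7]⟩, by norm_num [burP7], by norm_num [burP7]⟩
  fin_cases i <;> norm_num [burP7]

lemma burP8_mem : burP8 ∈ {x ∈ burniatPolytope | x 0 + x 1 + x 2 ≤ 1 ∧ x 11 + x 1 + x 2 ≤ 1} := by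
  refine ⟨⟨fun i => ?_, by norm_num [burP8], by norm_num [burP8], by norm_num [burP8], by norm_num [burP8]⟩, by norm_num [burP8], by norm_num [burP8]⟩
  fin_cases i <;> norm_num [burP8]

noncomputable def burD : Fin 8 → Fin 12 → ℝ :=
  ![burP1 - burP0, burP2 - burP0, burP3 - burP0, burP4 - burP0,
    burP5 - burP0, burP6 - burP0, burP7 - burP0, burP8 - burP0]


/-- row 1 of the table of maximal-dimensional matroid-polytope
intersections: the subset of the Burniat polytope cut out by `a₀+a₁+a₂ ≤ 1` and `c₃+a₁+a₂ ≤ 1`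
has affine dimension 8, i.e. it is a full-dimensional subpolytope of `Δ_bur`;
equivalently, `Δ_bur` contains a point satisfying all twelve inequality
constraints `0 < a_i, b_i, c_i < 1/2` strictly together with the strict form of
the cutting inequalit(y/ies). -/
theorem burniat_row1_full_dimensional :
    Module.finrank ℝ
      (vectorSpan ℝ {x ∈ burniatPolytope | x 0 + x 1 + x 2 ≤ 1 ∧ x 11 + x 1 + x 2 ≤ 1}) = 8 ∧
    ∃ x ∈ burniatPolytope, (∀ i : Fin 12, 0 < x i ∧ x i < 1/2) ∧
      (x 0 + x 1 + x 2 < 1 ∧ x 11 + x 1 + x 2 < 1) := by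
  constructor
  · have hupper : vectorSpan ℝ {x ∈ burniatPolytope | x 0 + x 1 + x 2 ≤ 1 ∧ x 11 + x 1 + x 2 ≤ 1}
        ≤ LinearMap.ker burL := by
      rw [vectorSpan_def, Submodule.span_le]
      rintro v ⟨x, hx, y, hy, rfl⟩
      have hx' := burL_const hx.1
      have hy' := burL_const hy.1
      simp only [SetLike.mem_coe, LinearMap.mem_ker, vsub_eq_sub, map_sub, hx', hy', sub_self]
    have hdin : ∀ j : Fin 8,
        burD j ∈ vectorSpan ℝ {x ∈ burniatPolytope | x 0 + x 1 + x 2 ≤ 1 ∧ x 11 + x 1 + x 2 ≤ 1} := by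
      intro j; fin_cases j
      · exact vsub_mem_vectorSpan ℝ burP1_mem burP0_mem
      · exact vsub_mem_vectorSpan ℝ burP2_mem burP0_mem
      · exact vsub_mem_vectorSpan ℝ burP3_mem burP0_mem
      · exact vsub_mem_vectorSpan ℝ burP4_mem burP0_mem
      · exact vsub_mem_vectorSpan ℝ burP5_mem burP0_mem
      · exact vsub_mem_vectorSpan ℝ burP6_mem burP0_mem
      · exact vsub_mem_vectorSpan ℝ burP7_mem burP0_mem
      · exact vsub_mem_vectorSpan ℝ burP8_mem burP0_mem
    have hli : LinearIndependent ℝ burD := by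
      rw [Fintype.linearIndependent_iff]
      intro g hg
      have e0 := congrFun hg 0
      have e1 := congrFun hg 1
      have e2 := congrFun hg 2
      have e4 := congrFun hg 4
      have e5 := congrFun hg 5
      have e6 := congrFun hg 6
      have e8 := congrFun hg 8
      have e9 := congrFun hg 9
      simp only [burD, Fin.sum_univ_eight, ev8_0, ev8_1, ev8_2, ev8_3, ev8_4, ev8_5, ev8_6, ev8_7, Finset.sum_apply, Pi.smul_apply,
        Pi.sub_apply, burP0, burP1, burP2, burP3, burP4, burP5, burP6, burP7, burP8,
        ev12_0, ev12_1, ev12_2, ev12_3, ev12_4, ev12_5, ev12_6, ev12_7, ev12_8, ev12_9, ev12_10, ev12_11, smul_eq_mul, Pi.zero_apply] at e0 e1 e2 e4 e5 e6 e8 e9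
      norm_num at e0 e1 e2 e4 e5 e6 e8 e9
      intro i; fin_cases i <;> assumption
    have hspan : Submodule.span ℝ (Set.range burD)
        ≤ vectorSpan ℝ {x ∈ burniatPolytope | x 0 + x 1 + x 2 ≤ 1 ∧ x 11 + x 1 + x 2 ≤ 1} :=
      Submodule.span_le.mpr (by rintro v ⟨j, rfl⟩; exact hdin j)
    have h8 : Module.finrank ℝ (Submodule.span ℝ (Set.range burD)) = 8 := by
      simpa using finrank_span_eq_card hli
    refine le_antisymm (le_trans (Submodule.finrank_mono hupper) (le_of_eq burL_ker)) ?_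
    exact h8 ▸ Submodule.finrank_mono hspan
  · exact ⟨burP0, burP0_mem.1, fun i => by fin_cases i <;> norm_num [burP0],
      by norm_num [burP0], by norm_num [burP0]⟩
end

section
/- The subset of the Burniat polytope Δ_bur cut out by the two inequalities a_0+a_1+b_2 ≤ 1 and c_3+c_2+a_1 ≤ 1 (row 2 of the table of maximal-dimensional matroid-polytope intersections) has affine dimension 8, i.e., it is a full-dimensional subpolytope of Δ_bur; equivalently, Δ_bur contains a point satisfying all twelve inequality constraints 0 < a_i,b_i,c_i < 1/2 strictly together with a_0+a_1+b_2 < 1 and c_3+c_2+a_1 < 1. -/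
set_option maxHeartbeats 1000000

namespace BurniatRow2

noncomputable def V : Fin 8 → Fin 12 → ℝ := fun k i =>
  if k = 0 then (if i = 0 then 1 else if i = 6 then -1 else if i = 7 then 1 else 0)
  else if k = 1 then (if i = 1 then 1 else if i = 6 then -1 else if i = 7 then 1 else if i = 11 then -1 else 0)
  else if k = 2 then (if i = 2 then 1 else if i = 6 then -1 else if i = 7 then 1 else if i = 11 then -1 else 0)
  else if k = 3 then (if i = 3 then 1 else if i = 4 then 1 else if i = 6 then -1 else 0)
  else if k = 4 then (if i = 5 then 1 else if i = 6 then -1 else 0)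
  else if k = 5 then (if i = 3 then 1 else if i = 6 then -1 else if i = 7 then 1 else if i = 8 then 1 else if i = 11 then -1 else 0)
  else if k = 6 then (if i = 3 then 1 else if i = 6 then -1 else if i = 9 then 1 else if i = 11 then -1 else 0)
  else (if i = 3 then 1 else if i = 6 then -1 else if i = 10 then 1 else if i = 11 then -1 else 0)

noncomputable def p : Fin 12 → ℝ := fun i =>
  if i = 1 then 1/4 else if i = 2 then 5/12 else 1/3

lemma lin_indep : LinearIndependent ℝ V := by
  rw [Fintype.linearIndependent_iff]
  intro g hg
  have h0 := congrFun hg 0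
  have h1 := congrFun hg 1
  have h2 := congrFun hg 2
  have h4 := congrFun hg 4
  have h5 := congrFun hg 5
  have h8 := congrFun hg 8
  have h9 := congrFun hg 9
  have h10 := congrFun hg 10
  simp (config := { decide := true }) [V, Fin.sum_univ_succ] at h0 h1 h2 h4 h5 h8 h9 h10
  intro i
  fin_cases i
  exacts [h0, h1, h2, h4, h5, h8, h9, h10]

lemma sub_mem_span {x y : Fin 12 → ℝ}
    (hxE : (x 0 + x 4 + x 8) + (x 1 + x 5 + x 9) + (x 2 + x 6 + x 10) = 3)
    (hx3 : x 3 = x 8 + x 9 + x 10 + x 4 - 1)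
    (hx7 : x 7 = x 0 + x 1 + x 2 + x 8 - 1)
    (hx11 : x 11 = x 4 + x 5 + x 6 + x 0 - 1)
    (hyE : (y 0 + y 4 + y 8) + (y 1 + y 5 + y 9) + (y 2 + y 6 + y 10) = 3)
    (hy3 : y 3 = y 8 + y 9 + y 10 + y 4 - 1)
    (hy7 : y 7 = y 0 + y 1 + y 2 + y 8 - 1)
    (hy11 : y 11 = y 4 + y 5 + y 6 + y 0 - 1) :
    x - y ∈ Submodule.span ℝ (Set.range V) := by
  have hdecomp : x - y = (x 0 - y 0) • V 0 + (x 1 - y 1) • V 1 + (x 2 - y 2) • V 2 +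
      (x 4 - y 4) • V 3 + (x 5 - y 5) • V 4 + (x 8 - y 8) • V 5 +
      (x 9 - y 9) • V 6 + (x 10 - y 10) • V 7 := by
    funext i
    fin_cases i <;>
      simp (config := { decide := true }) only [Fin.reduceFinMk, V, Pi.sub_apply, Pi.add_apply, Pi.smul_apply,
        smul_eq_mul, if_true, if_false, mul_one, mul_zero, mul_neg, add_zero, zero_add] <;>
      linarith
  rw [hdecomp]
  repeat' apply Submodule.add_mem
  all_goals exact Submodule.smul_mem _ _ (Submodule.subset_span ⟨_, rfl⟩)

lemma p_mem : p ∈ {x ∈ burniatPolytope | x 0 + x 1 + x 6 ≤ 1 ∧ x 11 + x 10 + x 1 ≤ 1} := by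
  refine ⟨⟨?_, by (simp (config := { decide := true }) [p, V] <;> norm_num), by (simp (config := { decide := true }) [p, V] <;> norm_num), by (simp (config := { decide := true }) [p, V] <;> norm_num), by (simp (config := { decide := true }) [p, V] <;> norm_num)⟩,
    by (simp (config := { decide := true }) [p, V] <;> norm_num), by (simp (config := { decide := true }) [p, V] <;> norm_num)⟩
  intro i; fin_cases i <;> (simp (config := { decide := true }) [p, V] <;> norm_num)

lemma q_mem (k : Fin 8) :
    p + (1/100 : ℝ) • V k ∈
      {x ∈ burniatPolytope | x 0 + x 1 + x 6 ≤ 1 ∧ x 11 + x 10 + x 1 ≤ 1} := by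
  fin_cases k <;>
  · refine ⟨⟨?_, ?_, ?_, ?_, ?_⟩, ?_, ?_⟩ <;>
    first
      | (intro i; fin_cases i <;> (simp (config := { decide := true }) [p, V] <;> norm_num))
      | (simp (config := { decide := true }) [p, V] <;> norm_num)

end BurniatRow2

open BurniatRow2 in
/-- row 2 of the table of maximal-dimensional matroid-polytope
intersections: the subset of the Burniat polytope cut out by `a₀+a₁+b₂ ≤ 1` and `c₃+c₂+a₁ ≤ 1`
has affine dimension 8, i.e. it is a full-dimensional subpolytope of `Δ_bur`;
equivalently, `Δ_bur` contains a point satisfying all twelve inequality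
constraints `0 < a_i, b_i, c_i < 1/2` strictly together with the strict form of
the cutting inequalit(y/ies). -/
theorem burniat_row2_full_dimensional :
    Module.finrank ℝ
      (vectorSpan ℝ {x ∈ burniatPolytope | x 0 + x 1 + x 6 ≤ 1 ∧ x 11 + x 10 + x 1 ≤ 1}) = 8 ∧
    ∃ x ∈ burniatPolytope, (∀ i : Fin 12, 0 < x i ∧ x i < 1/2) ∧
      (x 0 + x 1 + x 6 < 1 ∧ x 11 + x 10 + x 1 < 1) := by
  constructor
  · have hle : vectorSpan ℝ {x ∈ burniatPolytope | x 0 + x 1 + x 6 ≤ 1 ∧ x 11 + x 10 + x 1 ≤ 1}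
        ≤ Submodule.span ℝ (Set.range V) := by
      rw [vectorSpan_def, Submodule.span_le]
      rintro v hv
      rw [Set.mem_vsub] at hv
      obtain ⟨x, hx, y, hy, rfl⟩ := hv
      obtain ⟨⟨-, hxE, hx3, hx7, hx11⟩, -, -⟩ := hx
      obtain ⟨⟨-, hyE, hy3, hy7, hy11⟩, -, -⟩ := hy
      exact sub_mem_span hxE hx3 hx7 hx11 hyE hy3 hy7 hy11
    have hge : Submodule.span ℝ (Set.range V)
        ≤ vectorSpan ℝ {x ∈ burniatPolytope | x 0 + x 1 + x 6 ≤ 1 ∧ x 11 + x 10 + x 1 ≤ 1} := by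
      rw [Submodule.span_le]
      rintro v ⟨k, rfl⟩
      have hmem := vsub_mem_vectorSpan ℝ (q_mem k) p_mem
      have hv : V k = (100 : ℝ) • ((p + (1/100 : ℝ) • V k) -ᵥ p) := by
        simp only [vsub_eq_sub]
        module
      rw [hv]
      exact Submodule.smul_mem _ _ hmem
    rw [le_antisymm hle hge, finrank_span_eq_card lin_indep, Fintype.card_fin]
  · refine ⟨p, p_mem.1, ?_, by (simp (config := { decide := true }) [p, V] <;> norm_num), by (simp (config := { decide := true }) [p, V] <;> norm_num)⟩
    intro i; fin_cases i <;> (simp (config := { decide := true }) [p, V] <;> norm_num)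
end

section
/- The subset of the Burniat polytope Δ_bur cut out by the single inequality a_0+a_1+b_2 ≤ 1 (row 3 of the table of maximal-dimensional matroid-polytope intersections) has affine dimension 8, i.e., it is a full-dimensional subpolytope of Δ_bur; equivalently, Δ_bur contains a point satisfying all twelve inequality constraints 0 < a_i,b_i,c_i < 1/2 strictly together with a_0+a_1+b_2 < 1. -/
/-- Eight direction vectors spanning the kernel of the four linear constraints
defining `Δ_bur`; free coordinates are `0,1,2,4,5,6,8,9`. -/
noncomputable def bwv : Fin 8 → Fin 12 → ℝ := fun k i =>
  if k = 0 then (if i = 0 then 1 else if i = 3 then -1 else if i = 7 then 1 else if i = 10 then -1 else if i = 11 then 1 else 0)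
  else if k = 1 then (if i = 1 then 1 else if i = 3 then -1 else if i = 7 then 1 else if i = 10 then -1 else 0)
  else if k = 2 then (if i = 2 then 1 else if i = 3 then -1 else if i = 7 then 1 else if i = 10 then -1 else 0)
  else if k = 3 then (if i = 4 then 1 else if i = 10 then -1 else if i = 11 then 1 else 0)
  else if k = 4 then (if i = 5 then 1 else if i = 3 then -1 else if i = 10 then -1 else if i = 11 then 1 else 0)
  else if k = 5 then (if i = 6 then 1 else if i = 3 then -1 else if i = 10 then -1 else if i = 11 then 1 else 0)
  else if k = 6 then (if i = 8 then 1 else if i = 7 then 1 else if i = 10 then -1 else 0)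
  else (if i = 9 then 1 else if i = 10 then -1 else 0)

/-- An interior point of the row-3 subpolytope. -/
noncomputable def bpv : Fin 12 → ℝ := fun i =>
  if i = 2 ∨ i = 4 ∨ i = 5 ∨ i = 11 then 2/5 else 3/10

lemma bwv_li : LinearIndependent ℝ bwv := by
  rw [Fintype.linearIndependent_iff]
  intro g hg
  have h0 := congrFun hg 0
  have h1 := congrFun hg 1
  have h2 := congrFun hg 2
  have h4 := congrFun hg 4
  have h5 := congrFun hg 5
  have h6 := congrFun hg 6
  have h8 := congrFun hg 8
  have h9 := congrFun hg 9
  simp [bwv, Fin.sum_univ_eight] at h0 h1 h2 h4 h5 h6 h8 h9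
  intro i
  fin_cases i <;> assumption

lemma bpv_mem : bpv ∈ {x ∈ burniatPolytope | x 0 + x 1 + x 6 ≤ 1} := by
  refine ⟨⟨fun i => ?_, ?_, ?_, ?_, ?_⟩, ?_⟩
  · fin_cases i <;> simp (config := {decide := true}) [bpv] <;> norm_num
  all_goals (simp (config := {decide := true}) [bpv] <;> norm_num)

set_option maxHeartbeats 2000000 in
lemma bq_mem (k : Fin 8) :
    bpv + (1/100 : ℝ) • bwv k ∈ {x ∈ burniatPolytope | x 0 + x 1 + x 6 ≤ 1} := by
  fin_cases k <;>
  · refine ⟨⟨fun i => ?_, ?_, ?_, ?_, ?_⟩, ?_⟩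
    · fin_cases i <;> simp (config := {decide := true}) [bpv, bwv] <;> norm_num
    all_goals (simp (config := {decide := true}) [bpv, bwv] <;> norm_num)

lemma bkey {x y : Fin 12 → ℝ} (hx : x ∈ burniatPolytope) (hy : y ∈ burniatPolytope) :
    x - y = (x 0 - y 0) • bwv 0 + (x 1 - y 1) • bwv 1 + (x 2 - y 2) • bwv 2 +
      (x 4 - y 4) • bwv 3 + (x 5 - y 5) • bwv 4 + (x 6 - y 6) • bwv 5 +
      (x 8 - y 8) • bwv 6 + (x 9 - y 9) • bwv 7 := by
  obtain ⟨-, hx1, hx2, hx3, hx4⟩ := hx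
  obtain ⟨-, hy1, hy2, hy3, hy4⟩ := hy
  funext i
  fin_cases i <;> simp (config := {decide := true}) [bwv] <;> linarith

/-- row 3 of the table of maximal-dimensional matroid-polytope
intersections: the subset of the Burniat polytope cut out by `a₀+a₁+b₂ ≤ 1`
has affine dimension 8, i.e. it is a full-dimensional subpolytope of `Δ_bur`;
equivalently, `Δ_bur` contains a point satisfying all twelve inequality
constraints `0 < a_i, b_i, c_i < 1/2` strictly together with the strict form of
the cutting inequalit(y/ies). -/
theorem burniat_row3_full_dimensional :
    Module.finrank ℝ
      (vectorSpan ℝ {x ∈ burniatPolytope | x 0 + x 1 + x 6 ≤ 1}) = 8 ∧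
    ∃ x ∈ burniatPolytope, (∀ i : Fin 12, 0 < x i ∧ x i < 1/2) ∧
      (x 0 + x 1 + x 6 < 1) := by
  constructor
  · have hspan : vectorSpan ℝ {x ∈ burniatPolytope | x 0 + x 1 + x 6 ≤ 1}
        = Submodule.span ℝ (Set.range bwv) := by
      apply le_antisymm
      · rw [vectorSpan_def]
        apply Submodule.span_le.mpr
        rintro v ⟨x, hx, y, hy, rfl⟩
        show x - y ∈ _
        rw [bkey hx.1 hy.1]
        have hm : ∀ k : Fin 8, bwv k ∈ Submodule.span ℝ (Set.range bwv) :=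
          fun k => Submodule.subset_span ⟨k, rfl⟩
        exact add_mem (add_mem (add_mem (add_mem (add_mem (add_mem (add_mem
          (Submodule.smul_mem _ _ (hm 0)) (Submodule.smul_mem _ _ (hm 1)))
          (Submodule.smul_mem _ _ (hm 2))) (Submodule.smul_mem _ _ (hm 3)))
          (Submodule.smul_mem _ _ (hm 4))) (Submodule.smul_mem _ _ (hm 5)))
          (Submodule.smul_mem _ _ (hm 6))) (Submodule.smul_mem _ _ (hm 7))
      · apply Submodule.span_le.mpr
        rintro _ ⟨k, rfl⟩
        have h := vsub_mem_vectorSpan ℝ (bq_mem k) bpv_mem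
        rw [vsub_eq_sub, add_sub_cancel_left] at h
        have h2 := Submodule.smul_mem _ (100 : ℝ) h
        rw [smul_smul] at h2
        norm_num at h2
        exact h2
    rw [hspan, finrank_span_eq_card bwv_li, Fintype.card_fin]
  · refine ⟨bpv, bpv_mem.1, fun i => ?_, ?_⟩
    · fin_cases i <;> simp (config := {decide := true}) [bpv] <;> norm_num
    · simp (config := {decide := true}) [bpv] <;> norm_num
end

section
/- The subset of the Burniat polytope Δ_bur cut out by the two inequalities c_3+c_2+a_1 ≤ 1 and b_3+b_2+c_1 ≤ 1 (row 4 of the table of maximal-dimensional matroid-polytope intersections) has affine dimension 8, i.e., it is a full-dimensional subpolytope of Δ_bur; equivalently, Δ_bur contains a point satisfying all twelve inequality constraints 0 < a_i,b_i,c_i < 1/2 strictly together with c_3+c_2+a_1 < 1 and b_3+b_2+c_1 < 1. -/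
noncomputable def qq0 : Fin 12 → ℝ := ![8/24, 6/24, 8/24, 10/24, 8/24, 8/24, 8/24, 7/24, 9/24, 8/24, 9/24, 8/24]
noncomputable def qq1 : Fin 12 → ℝ := ![9/24, 5/24, 8/24, 10/24, 8/24, 8/24, 8/24, 7/24, 9/24, 8/24, 9/24, 9/24]
noncomputable def qq2 : Fin 12 → ℝ := ![8/24, 5/24, 9/24, 10/24, 8/24, 8/24, 8/24, 7/24, 9/24, 8/24, 9/24, 8/24]
noncomputable def qq3 : Fin 12 → ℝ := ![8/24, 5/24, 8/24, 11/24, 9/24, 8/24, 8/24, 6/24, 9/24, 8/24, 9/24, 9/24]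
noncomputable def qq4 : Fin 12 → ℝ := ![8/24, 5/24, 8/24, 10/24, 8/24, 9/24, 8/24, 6/24, 9/24, 8/24, 9/24, 9/24]
noncomputable def qq5 : Fin 12 → ℝ := ![8/24, 5/24, 8/24, 10/24, 8/24, 8/24, 9/24, 6/24, 9/24, 8/24, 9/24, 9/24]
noncomputable def qq6 : Fin 12 → ℝ := ![8/24, 5/24, 8/24, 11/24, 8/24, 8/24, 8/24, 7/24, 10/24, 8/24, 9/24, 8/24]
noncomputable def qq7 : Fin 12 → ℝ := ![8/24, 5/24, 8/24, 11/24, 8/24, 8/24, 8/24, 6/24, 9/24, 9/24, 9/24, 8/24]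
noncomputable def qq8 : Fin 12 → ℝ := ![8/24, 5/24, 8/24, 11/24, 8/24, 8/24, 8/24, 6/24, 9/24, 8/24, 10/24, 8/24]

noncomputable def wv : Fin 8 → Fin 12 → ℝ :=
  ![![1, -1, 0, 0, 0, 0, 0, 0, 0, 0, 0, 1],
    ![0, -1, 1, 0, 0, 0, 0, 0, 0, 0, 0, 0],
    ![0, -1, 0, 1, 1, 0, 0, -1, 0, 0, 0, 1],
    ![0, -1, 0, 0, 0, 1, 0, -1, 0, 0, 0, 1],
    ![0, -1, 0, 0, 0, 0, 1, -1, 0, 0, 0, 1],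
    ![0, -1, 0, 1, 0, 0, 0, 0, 1, 0, 0, 0],
    ![0, -1, 0, 1, 0, 0, 0, -1, 0, 1, 0, 0],
    ![0, -1, 0, 1, 0, 0, 0, -1, 0, 0, 1, 0]]

lemma qq0v0 : qq0 (0 : Fin 12) = 8/24 := rfl
lemma qq0v1 : qq0 (1 : Fin 12) = 6/24 := rfl
lemma qq0v2 : qq0 (2 : Fin 12) = 8/24 := rfl
lemma qq0v3 : qq0 (3 : Fin 12) = 10/24 := rfl
lemma qq0v4 : qq0 (4 : Fin 12) = 8/24 := rfl
lemma qq0v5 : qq0 (5 : Fin 12) = 8/24 := rfl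
lemma qq0v6 : qq0 (6 : Fin 12) = 8/24 := rfl
lemma qq0v7 : qq0 (7 : Fin 12) = 7/24 := rfl
lemma qq0v8 : qq0 (8 : Fin 12) = 9/24 := rfl
lemma qq0v9 : qq0 (9 : Fin 12) = 8/24 := rfl
lemma qq0v10 : qq0 (10 : Fin 12) = 9/24 := rfl
lemma qq0v11 : qq0 (11 : Fin 12) = 8/24 := rfl
lemma qq1v0 : qq1 (0 : Fin 12) = 9/24 := rfl
lemma qq1v1 : qq1 (1 : Fin 12) = 5/24 := rfl
lemma qq1v2 : qq1 (2 : Fin 12) = 8/24 := rfl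
lemma qq1v3 : qq1 (3 : Fin 12) = 10/24 := rfl
lemma qq1v4 : qq1 (4 : Fin 12) = 8/24 := rfl
lemma qq1v5 : qq1 (5 : Fin 12) = 8/24 := rfl
lemma qq1v6 : qq1 (6 : Fin 12) = 8/24 := rfl
lemma qq1v7 : qq1 (7 : Fin 12) = 7/24 := rfl
lemma qq1v8 : qq1 (8 : Fin 12) = 9/24 := rfl
lemma qq1v9 : qq1 (9 : Fin 12) = 8/24 := rfl
lemma qq1v10 : qq1 (10 : Fin 12) = 9/24 := rfl
lemma qq1v11 : qq1 (11 : Fin 12) = 9/24 := rfl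
lemma qq2v0 : qq2 (0 : Fin 12) = 8/24 := rfl
lemma qq2v1 : qq2 (1 : Fin 12) = 5/24 := rfl
lemma qq2v2 : qq2 (2 : Fin 12) = 9/24 := rfl
lemma qq2v3 : qq2 (3 : Fin 12) = 10/24 := rfl
lemma qq2v4 : qq2 (4 : Fin 12) = 8/24 := rfl
lemma qq2v5 : qq2 (5 : Fin 12) = 8/24 := rfl
lemma qq2v6 : qq2 (6 : Fin 12) = 8/24 := rfl
lemma qq2v7 : qq2 (7 : Fin 12) = 7/24 := rfl
lemma qq2v8 : qq2 (8 : Fin 12) = 9/24 := rfl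
lemma qq2v9 : qq2 (9 : Fin 12) = 8/24 := rfl
lemma qq2v10 : qq2 (10 : Fin 12) = 9/24 := rfl
lemma qq2v11 : qq2 (11 : Fin 12) = 8/24 := rfl
lemma qq3v0 : qq3 (0 : Fin 12) = 8/24 := rfl
lemma qq3v1 : qq3 (1 : Fin 12) = 5/24 := rfl
lemma qq3v2 : qq3 (2 : Fin 12) = 8/24 := rfl
lemma qq3v3 : qq3 (3 : Fin 12) = 11/24 := rfl
lemma qq3v4 : qq3 (4 : Fin 12) = 9/24 := rfl
lemma qq3v5 : qq3 (5 : Fin 12) = 8/24 := rfl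
lemma qq3v6 : qq3 (6 : Fin 12) = 8/24 := rfl
lemma qq3v7 : qq3 (7 : Fin 12) = 6/24 := rfl
lemma qq3v8 : qq3 (8 : Fin 12) = 9/24 := rfl
lemma qq3v9 : qq3 (9 : Fin 12) = 8/24 := rfl
lemma qq3v10 : qq3 (10 : Fin 12) = 9/24 := rfl
lemma qq3v11 : qq3 (11 : Fin 12) = 9/24 := rfl
lemma qq4v0 : qq4 (0 : Fin 12) = 8/24 := rfl
lemma qq4v1 : qq4 (1 : Fin 12) = 5/24 := rfl
lemma qq4v2 : qq4 (2 : Fin 12) = 8/24 := rfl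
lemma qq4v3 : qq4 (3 : Fin 12) = 10/24 := rfl
lemma qq4v4 : qq4 (4 : Fin 12) = 8/24 := rfl
lemma qq4v5 : qq4 (5 : Fin 12) = 9/24 := rfl
lemma qq4v6 : qq4 (6 : Fin 12) = 8/24 := rfl
lemma qq4v7 : qq4 (7 : Fin 12) = 6/24 := rfl
lemma qq4v8 : qq4 (8 : Fin 12) = 9/24 := rfl
lemma qq4v9 : qq4 (9 : Fin 12) = 8/24 := rfl
lemma qq4v10 : qq4 (10 : Fin 12) = 9/24 := rfl
lemma qq4v11 : qq4 (11 : Fin 12) = 9/24 := rfl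
lemma qq5v0 : qq5 (0 : Fin 12) = 8/24 := rfl
lemma qq5v1 : qq5 (1 : Fin 12) = 5/24 := rfl
lemma qq5v2 : qq5 (2 : Fin 12) = 8/24 := rfl
lemma qq5v3 : qq5 (3 : Fin 12) = 10/24 := rfl
lemma qq5v4 : qq5 (4 : Fin 12) = 8/24 := rfl
lemma qq5v5 : qq5 (5 : Fin 12) = 8/24 := rfl
lemma qq5v6 : qq5 (6 : Fin 12) = 9/24 := rfl
lemma qq5v7 : qq5 (7 : Fin 12) = 6/24 := rfl
lemma qq5v8 : qq5 (8 : Fin 12) = 9/24 := rfl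
lemma qq5v9 : qq5 (9 : Fin 12) = 8/24 := rfl
lemma qq5v10 : qq5 (10 : Fin 12) = 9/24 := rfl
lemma qq5v11 : qq5 (11 : Fin 12) = 9/24 := rfl
lemma qq6v0 : qq6 (0 : Fin 12) = 8/24 := rfl
lemma qq6v1 : qq6 (1 : Fin 12) = 5/24 := rfl
lemma qq6v2 : qq6 (2 : Fin 12) = 8/24 := rfl
lemma qq6v3 : qq6 (3 : Fin 12) = 11/24 := rfl
lemma qq6v4 : qq6 (4 : Fin 12) = 8/24 := rfl
lemma qq6v5 : qq6 (5 : Fin 12) = 8/24 := rfl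
lemma qq6v6 : qq6 (6 : Fin 12) = 8/24 := rfl
lemma qq6v7 : qq6 (7 : Fin 12) = 7/24 := rfl
lemma qq6v8 : qq6 (8 : Fin 12) = 10/24 := rfl
lemma qq6v9 : qq6 (9 : Fin 12) = 8/24 := rfl
lemma qq6v10 : qq6 (10 : Fin 12) = 9/24 := rfl
lemma qq6v11 : qq6 (11 : Fin 12) = 8/24 := rfl
lemma qq7v0 : qq7 (0 : Fin 12) = 8/24 := rfl
lemma qq7v1 : qq7 (1 : Fin 12) = 5/24 := rfl
lemma qq7v2 : qq7 (2 : Fin 12) = 8/24 := rfl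
lemma qq7v3 : qq7 (3 : Fin 12) = 11/24 := rfl
lemma qq7v4 : qq7 (4 : Fin 12) = 8/24 := rfl
lemma qq7v5 : qq7 (5 : Fin 12) = 8/24 := rfl
lemma qq7v6 : qq7 (6 : Fin 12) = 8/24 := rfl
lemma qq7v7 : qq7 (7 : Fin 12) = 6/24 := rfl
lemma qq7v8 : qq7 (8 : Fin 12) = 9/24 := rfl
lemma qq7v9 : qq7 (9 : Fin 12) = 9/24 := rfl
lemma qq7v10 : qq7 (10 : Fin 12) = 9/24 := rfl
lemma qq7v11 : qq7 (11 : Fin 12) = 8/24 := rfl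
lemma qq8v0 : qq8 (0 : Fin 12) = 8/24 := rfl
lemma qq8v1 : qq8 (1 : Fin 12) = 5/24 := rfl
lemma qq8v2 : qq8 (2 : Fin 12) = 8/24 := rfl
lemma qq8v3 : qq8 (3 : Fin 12) = 11/24 := rfl
lemma qq8v4 : qq8 (4 : Fin 12) = 8/24 := rfl
lemma qq8v5 : qq8 (5 : Fin 12) = 8/24 := rfl
lemma qq8v6 : qq8 (6 : Fin 12) = 8/24 := rfl
lemma qq8v7 : qq8 (7 : Fin 12) = 6/24 := rfl
lemma qq8v8 : qq8 (8 : Fin 12) = 9/24 := rfl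
lemma qq8v9 : qq8 (9 : Fin 12) = 8/24 := rfl
lemma qq8v10 : qq8 (10 : Fin 12) = 10/24 := rfl
lemma qq8v11 : qq8 (11 : Fin 12) = 8/24 := rfl

lemma wv0v0 : wv (0 : Fin 8) (0 : Fin 12) = (1 : ℝ) := rfl
lemma wv0v1 : wv (0 : Fin 8) (1 : Fin 12) = (-1 : ℝ) := rfl
lemma wv0v2 : wv (0 : Fin 8) (2 : Fin 12) = (0 : ℝ) := rfl
lemma wv0v3 : wv (0 : Fin 8) (3 : Fin 12) = (0 : ℝ) := rfl
lemma wv0v4 : wv (0 : Fin 8) (4 : Fin 12) = (0 : ℝ) := rfl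
lemma wv0v5 : wv (0 : Fin 8) (5 : Fin 12) = (0 : ℝ) := rfl
lemma wv0v6 : wv (0 : Fin 8) (6 : Fin 12) = (0 : ℝ) := rfl
lemma wv0v7 : wv (0 : Fin 8) (7 : Fin 12) = (0 : ℝ) := rfl
lemma wv0v8 : wv (0 : Fin 8) (8 : Fin 12) = (0 : ℝ) := rfl
lemma wv0v9 : wv (0 : Fin 8) (9 : Fin 12) = (0 : ℝ) := rfl
lemma wv0v10 : wv (0 : Fin 8) (10 : Fin 12) = (0 : ℝ) := rfl
lemma wv0v11 : wv (0 : Fin 8) (11 : Fin 12) = (1 : ℝ) := rfl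
lemma wv1v0 : wv (1 : Fin 8) (0 : Fin 12) = (0 : ℝ) := rfl
lemma wv1v1 : wv (1 : Fin 8) (1 : Fin 12) = (-1 : ℝ) := rfl
lemma wv1v2 : wv (1 : Fin 8) (2 : Fin 12) = (1 : ℝ) := rfl
lemma wv1v3 : wv (1 : Fin 8) (3 : Fin 12) = (0 : ℝ) := rfl
lemma wv1v4 : wv (1 : Fin 8) (4 : Fin 12) = (0 : ℝ) := rfl
lemma wv1v5 : wv (1 : Fin 8) (5 : Fin 12) = (0 : ℝ) := rfl
lemma wv1v6 : wv (1 : Fin 8) (6 : Fin 12) = (0 : ℝ) := rfl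
lemma wv1v7 : wv (1 : Fin 8) (7 : Fin 12) = (0 : ℝ) := rfl
lemma wv1v8 : wv (1 : Fin 8) (8 : Fin 12) = (0 : ℝ) := rfl
lemma wv1v9 : wv (1 : Fin 8) (9 : Fin 12) = (0 : ℝ) := rfl
lemma wv1v10 : wv (1 : Fin 8) (10 : Fin 12) = (0 : ℝ) := rfl
lemma wv1v11 : wv (1 : Fin 8) (11 : Fin 12) = (0 : ℝ) := rfl
lemma wv2v0 : wv (2 : Fin 8) (0 : Fin 12) = (0 : ℝ) := rfl
lemma wv2v1 : wv (2 : Fin 8) (1 : Fin 12) = (-1 : ℝ) := rfl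
lemma wv2v2 : wv (2 : Fin 8) (2 : Fin 12) = (0 : ℝ) := rfl
lemma wv2v3 : wv (2 : Fin 8) (3 : Fin 12) = (1 : ℝ) := rfl
lemma wv2v4 : wv (2 : Fin 8) (4 : Fin 12) = (1 : ℝ) := rfl
lemma wv2v5 : wv (2 : Fin 8) (5 : Fin 12) = (0 : ℝ) := rfl
lemma wv2v6 : wv (2 : Fin 8) (6 : Fin 12) = (0 : ℝ) := rfl
lemma wv2v7 : wv (2 : Fin 8) (7 : Fin 12) = (-1 : ℝ) := rfl
lemma wv2v8 : wv (2 : Fin 8) (8 : Fin 12) = (0 : ℝ) := rfl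
lemma wv2v9 : wv (2 : Fin 8) (9 : Fin 12) = (0 : ℝ) := rfl
lemma wv2v10 : wv (2 : Fin 8) (10 : Fin 12) = (0 : ℝ) := rfl
lemma wv2v11 : wv (2 : Fin 8) (11 : Fin 12) = (1 : ℝ) := rfl
lemma wv3v0 : wv (3 : Fin 8) (0 : Fin 12) = (0 : ℝ) := rfl
lemma wv3v1 : wv (3 : Fin 8) (1 : Fin 12) = (-1 : ℝ) := rfl
lemma wv3v2 : wv (3 : Fin 8) (2 : Fin 12) = (0 : ℝ) := rfl
lemma wv3v3 : wv (3 : Fin 8) (3 : Fin 12) = (0 : ℝ) := rfl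
lemma wv3v4 : wv (3 : Fin 8) (4 : Fin 12) = (0 : ℝ) := rfl
lemma wv3v5 : wv (3 : Fin 8) (5 : Fin 12) = (1 : ℝ) := rfl
lemma wv3v6 : wv (3 : Fin 8) (6 : Fin 12) = (0 : ℝ) := rfl
lemma wv3v7 : wv (3 : Fin 8) (7 : Fin 12) = (-1 : ℝ) := rfl
lemma wv3v8 : wv (3 : Fin 8) (8 : Fin 12) = (0 : ℝ) := rfl
lemma wv3v9 : wv (3 : Fin 8) (9 : Fin 12) = (0 : ℝ) := rfl
lemma wv3v10 : wv (3 : Fin 8) (10 : Fin 12) = (0 : ℝ) := rfl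
lemma wv3v11 : wv (3 : Fin 8) (11 : Fin 12) = (1 : ℝ) := rfl
lemma wv4v0 : wv (4 : Fin 8) (0 : Fin 12) = (0 : ℝ) := rfl
lemma wv4v1 : wv (4 : Fin 8) (1 : Fin 12) = (-1 : ℝ) := rfl
lemma wv4v2 : wv (4 : Fin 8) (2 : Fin 12) = (0 : ℝ) := rfl
lemma wv4v3 : wv (4 : Fin 8) (3 : Fin 12) = (0 : ℝ) := rfl
lemma wv4v4 : wv (4 : Fin 8) (4 : Fin 12) = (0 : ℝ) := rfl
lemma wv4v5 : wv (4 : Fin 8) (5 : Fin 12) = (0 : ℝ) := rfl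
lemma wv4v6 : wv (4 : Fin 8) (6 : Fin 12) = (1 : ℝ) := rfl
lemma wv4v7 : wv (4 : Fin 8) (7 : Fin 12) = (-1 : ℝ) := rfl
lemma wv4v8 : wv (4 : Fin 8) (8 : Fin 12) = (0 : ℝ) := rfl
lemma wv4v9 : wv (4 : Fin 8) (9 : Fin 12) = (0 : ℝ) := rfl
lemma wv4v10 : wv (4 : Fin 8) (10 : Fin 12) = (0 : ℝ) := rfl
lemma wv4v11 : wv (4 : Fin 8) (11 : Fin 12) = (1 : ℝ) := rfl
lemma wv5v0 : wv (5 : Fin 8) (0 : Fin 12) = (0 : ℝ) := rfl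
lemma wv5v1 : wv (5 : Fin 8) (1 : Fin 12) = (-1 : ℝ) := rfl
lemma wv5v2 : wv (5 : Fin 8) (2 : Fin 12) = (0 : ℝ) := rfl
lemma wv5v3 : wv (5 : Fin 8) (3 : Fin 12) = (1 : ℝ) := rfl
lemma wv5v4 : wv (5 : Fin 8) (4 : Fin 12) = (0 : ℝ) := rfl
lemma wv5v5 : wv (5 : Fin 8) (5 : Fin 12) = (0 : ℝ) := rfl
lemma wv5v6 : wv (5 : Fin 8) (6 : Fin 12) = (0 : ℝ) := rfl
lemma wv5v7 : wv (5 : Fin 8) (7 : Fin 12) = (0 : ℝ) := rfl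
lemma wv5v8 : wv (5 : Fin 8) (8 : Fin 12) = (1 : ℝ) := rfl
lemma wv5v9 : wv (5 : Fin 8) (9 : Fin 12) = (0 : ℝ) := rfl
lemma wv5v10 : wv (5 : Fin 8) (10 : Fin 12) = (0 : ℝ) := rfl
lemma wv5v11 : wv (5 : Fin 8) (11 : Fin 12) = (0 : ℝ) := rfl
lemma wv6v0 : wv (6 : Fin 8) (0 : Fin 12) = (0 : ℝ) := rfl
lemma wv6v1 : wv (6 : Fin 8) (1 : Fin 12) = (-1 : ℝ) := rfl
lemma wv6v2 : wv (6 : Fin 8) (2 : Fin 12) = (0 : ℝ) := rfl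
lemma wv6v3 : wv (6 : Fin 8) (3 : Fin 12) = (1 : ℝ) := rfl
lemma wv6v4 : wv (6 : Fin 8) (4 : Fin 12) = (0 : ℝ) := rfl
lemma wv6v5 : wv (6 : Fin 8) (5 : Fin 12) = (0 : ℝ) := rfl
lemma wv6v6 : wv (6 : Fin 8) (6 : Fin 12) = (0 : ℝ) := rfl
lemma wv6v7 : wv (6 : Fin 8) (7 : Fin 12) = (-1 : ℝ) := rfl
lemma wv6v8 : wv (6 : Fin 8) (8 : Fin 12) = (0 : ℝ) := rfl
lemma wv6v9 : wv (6 : Fin 8) (9 : Fin 12) = (1 : ℝ) := rfl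
lemma wv6v10 : wv (6 : Fin 8) (10 : Fin 12) = (0 : ℝ) := rfl
lemma wv6v11 : wv (6 : Fin 8) (11 : Fin 12) = (0 : ℝ) := rfl
lemma wv7v0 : wv (7 : Fin 8) (0 : Fin 12) = (0 : ℝ) := rfl
lemma wv7v1 : wv (7 : Fin 8) (1 : Fin 12) = (-1 : ℝ) := rfl
lemma wv7v2 : wv (7 : Fin 8) (2 : Fin 12) = (0 : ℝ) := rfl
lemma wv7v3 : wv (7 : Fin 8) (3 : Fin 12) = (1 : ℝ) := rfl
lemma wv7v4 : wv (7 : Fin 8) (4 : Fin 12) = (0 : ℝ) := rfl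
lemma wv7v5 : wv (7 : Fin 8) (5 : Fin 12) = (0 : ℝ) := rfl
lemma wv7v6 : wv (7 : Fin 8) (6 : Fin 12) = (0 : ℝ) := rfl
lemma wv7v7 : wv (7 : Fin 8) (7 : Fin 12) = (-1 : ℝ) := rfl
lemma wv7v8 : wv (7 : Fin 8) (8 : Fin 12) = (0 : ℝ) := rfl
lemma wv7v9 : wv (7 : Fin 8) (9 : Fin 12) = (0 : ℝ) := rfl
lemma wv7v10 : wv (7 : Fin 8) (10 : Fin 12) = (1 : ℝ) := rfl
lemma wv7v11 : wv (7 : Fin 8) (11 : Fin 12) = (0 : ℝ) := rfl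


lemma hqq0 : qq0 ∈ {x ∈ burniatPolytope | x 11 + x 10 + x 1 ≤ 1 ∧ x 7 + x 6 + x 9 ≤ 1} := by
  refine ⟨⟨fun i => ?_, ?_, ?_, ?_, ?_⟩, ?_, ?_⟩
  · fin_cases i <;> norm_num [qq0]
  all_goals norm_num [qq0v0, qq0v1, qq0v2, qq0v3, qq0v4, qq0v5, qq0v6, qq0v7, qq0v8, qq0v9, qq0v10, qq0v11]

lemma hqq1 : qq1 ∈ {x ∈ burniatPolytope | x 11 + x 10 + x 1 ≤ 1 ∧ x 7 + x 6 + x 9 ≤ 1} := by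
  refine ⟨⟨fun i => ?_, ?_, ?_, ?_, ?_⟩, ?_, ?_⟩
  · fin_cases i <;> norm_num [qq1]
  all_goals norm_num [qq1v0, qq1v1, qq1v2, qq1v3, qq1v4, qq1v5, qq1v6, qq1v7, qq1v8, qq1v9, qq1v10, qq1v11]

lemma hqq2 : qq2 ∈ {x ∈ burniatPolytope | x 11 + x 10 + x 1 ≤ 1 ∧ x 7 + x 6 + x 9 ≤ 1} := by
  refine ⟨⟨fun i => ?_, ?_, ?_, ?_, ?_⟩, ?_, ?_⟩
  · fin_cases i <;> norm_num [qq2]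
  all_goals norm_num [qq2v0, qq2v1, qq2v2, qq2v3, qq2v4, qq2v5, qq2v6, qq2v7, qq2v8, qq2v9, qq2v10, qq2v11]

lemma hqq3 : qq3 ∈ {x ∈ burniatPolytope | x 11 + x 10 + x 1 ≤ 1 ∧ x 7 + x 6 + x 9 ≤ 1} := by
  refine ⟨⟨fun i => ?_, ?_, ?_, ?_, ?_⟩, ?_, ?_⟩
  · fin_cases i <;> norm_num [qq3]
  all_goals norm_num [qq3v0, qq3v1, qq3v2, qq3v3, qq3v4, qq3v5, qq3v6, qq3v7, qq3v8, qq3v9, qq3v10, qq3v11]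

lemma hqq4 : qq4 ∈ {x ∈ burniatPolytope | x 11 + x 10 + x 1 ≤ 1 ∧ x 7 + x 6 + x 9 ≤ 1} := by
  refine ⟨⟨fun i => ?_, ?_, ?_, ?_, ?_⟩, ?_, ?_⟩
  · fin_cases i <;> norm_num [qq4]
  all_goals norm_num [qq4v0, qq4v1, qq4v2, qq4v3, qq4v4, qq4v5, qq4v6, qq4v7, qq4v8, qq4v9, qq4v10, qq4v11]

lemma hqq5 : qq5 ∈ {x ∈ burniatPolytope | x 11 + x 10 + x 1 ≤ 1 ∧ x 7 + x 6 + x 9 ≤ 1} := by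
  refine ⟨⟨fun i => ?_, ?_, ?_, ?_, ?_⟩, ?_, ?_⟩
  · fin_cases i <;> norm_num [qq5]
  all_goals norm_num [qq5v0, qq5v1, qq5v2, qq5v3, qq5v4, qq5v5, qq5v6, qq5v7, qq5v8, qq5v9, qq5v10, qq5v11]

lemma hqq6 : qq6 ∈ {x ∈ burniatPolytope | x 11 + x 10 + x 1 ≤ 1 ∧ x 7 + x 6 + x 9 ≤ 1} := by
  refine ⟨⟨fun i => ?_, ?_, ?_, ?_, ?_⟩, ?_, ?_⟩
  · fin_cases i <;> norm_num [qq6]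
  all_goals norm_num [qq6v0, qq6v1, qq6v2, qq6v3, qq6v4, qq6v5, qq6v6, qq6v7, qq6v8, qq6v9, qq6v10, qq6v11]

lemma hqq7 : qq7 ∈ {x ∈ burniatPolytope | x 11 + x 10 + x 1 ≤ 1 ∧ x 7 + x 6 + x 9 ≤ 1} := by
  refine ⟨⟨fun i => ?_, ?_, ?_, ?_, ?_⟩, ?_, ?_⟩
  · fin_cases i <;> norm_num [qq7]
  all_goals norm_num [qq7v0, qq7v1, qq7v2, qq7v3, qq7v4, qq7v5, qq7v6, qq7v7, qq7v8, qq7v9, qq7v10, qq7v11]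

lemma hqq8 : qq8 ∈ {x ∈ burniatPolytope | x 11 + x 10 + x 1 ≤ 1 ∧ x 7 + x 6 + x 9 ≤ 1} := by
  refine ⟨⟨fun i => ?_, ?_, ?_, ?_, ?_⟩, ?_, ?_⟩
  · fin_cases i <;> norm_num [qq8]
  all_goals norm_num [qq8v0, qq8v1, qq8v2, qq8v3, qq8v4, qq8v5, qq8v6, qq8v7, qq8v8, qq8v9, qq8v10, qq8v11]


lemma wv_diff0 : wv 0 = (24 : ℝ) • (qq1 -ᵥ qq0) := by
  have h0 : wv 0 (0 : Fin 12) = ((24 : ℝ) • (qq1 -ᵥ qq0)) (0 : Fin 12) := by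
    simp only [Pi.smul_apply, vsub_eq_sub, Pi.sub_apply, smul_eq_mul, wv0v0, qq1v0, qq0v0]
    norm_num
  have h1 : wv 0 (1 : Fin 12) = ((24 : ℝ) • (qq1 -ᵥ qq0)) (1 : Fin 12) := by
    simp only [Pi.smul_apply, vsub_eq_sub, Pi.sub_apply, smul_eq_mul, wv0v1, qq1v1, qq0v1]
    norm_num
  have h2 : wv 0 (2 : Fin 12) = ((24 : ℝ) • (qq1 -ᵥ qq0)) (2 : Fin 12) := by
    simp only [Pi.smul_apply, vsub_eq_sub, Pi.sub_apply, smul_eq_mul, wv0v2, qq1v2, qq0v2]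
    norm_num
  have h3 : wv 0 (3 : Fin 12) = ((24 : ℝ) • (qq1 -ᵥ qq0)) (3 : Fin 12) := by
    simp only [Pi.smul_apply, vsub_eq_sub, Pi.sub_apply, smul_eq_mul, wv0v3, qq1v3, qq0v3]
    norm_num
  have h4 : wv 0 (4 : Fin 12) = ((24 : ℝ) • (qq1 -ᵥ qq0)) (4 : Fin 12) := by
    simp only [Pi.smul_apply, vsub_eq_sub, Pi.sub_apply, smul_eq_mul, wv0v4, qq1v4, qq0v4]
    norm_num
  have h5 : wv 0 (5 : Fin 12) = ((24 : ℝ) • (qq1 -ᵥ qq0)) (5 : Fin 12) := by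
    simp only [Pi.smul_apply, vsub_eq_sub, Pi.sub_apply, smul_eq_mul, wv0v5, qq1v5, qq0v5]
    norm_num
  have h6 : wv 0 (6 : Fin 12) = ((24 : ℝ) • (qq1 -ᵥ qq0)) (6 : Fin 12) := by
    simp only [Pi.smul_apply, vsub_eq_sub, Pi.sub_apply, smul_eq_mul, wv0v6, qq1v6, qq0v6]
    norm_num
  have h7 : wv 0 (7 : Fin 12) = ((24 : ℝ) • (qq1 -ᵥ qq0)) (7 : Fin 12) := by
    simp only [Pi.smul_apply, vsub_eq_sub, Pi.sub_apply, smul_eq_mul, wv0v7, qq1v7, qq0v7]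
    norm_num
  have h8 : wv 0 (8 : Fin 12) = ((24 : ℝ) • (qq1 -ᵥ qq0)) (8 : Fin 12) := by
    simp only [Pi.smul_apply, vsub_eq_sub, Pi.sub_apply, smul_eq_mul, wv0v8, qq1v8, qq0v8]
    norm_num
  have h9 : wv 0 (9 : Fin 12) = ((24 : ℝ) • (qq1 -ᵥ qq0)) (9 : Fin 12) := by
    simp only [Pi.smul_apply, vsub_eq_sub, Pi.sub_apply, smul_eq_mul, wv0v9, qq1v9, qq0v9]
    norm_num
  have h10 : wv 0 (10 : Fin 12) = ((24 : ℝ) • (qq1 -ᵥ qq0)) (10 : Fin 12) := by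
    simp only [Pi.smul_apply, vsub_eq_sub, Pi.sub_apply, smul_eq_mul, wv0v10, qq1v10, qq0v10]
    norm_num
  have h11 : wv 0 (11 : Fin 12) = ((24 : ℝ) • (qq1 -ᵥ qq0)) (11 : Fin 12) := by
    simp only [Pi.smul_apply, vsub_eq_sub, Pi.sub_apply, smul_eq_mul, wv0v11, qq1v11, qq0v11]
    norm_num
  funext j
  fin_cases j
  exacts [h0, h1, h2, h3, h4, h5, h6, h7, h8, h9, h10, h11]

lemma wv_diff1 : wv 1 = (24 : ℝ) • (qq2 -ᵥ qq0) := by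
  have h0 : wv 1 (0 : Fin 12) = ((24 : ℝ) • (qq2 -ᵥ qq0)) (0 : Fin 12) := by
    simp only [Pi.smul_apply, vsub_eq_sub, Pi.sub_apply, smul_eq_mul, wv1v0, qq2v0, qq0v0]
    norm_num
  have h1 : wv 1 (1 : Fin 12) = ((24 : ℝ) • (qq2 -ᵥ qq0)) (1 : Fin 12) := by
    simp only [Pi.smul_apply, vsub_eq_sub, Pi.sub_apply, smul_eq_mul, wv1v1, qq2v1, qq0v1]
    norm_num
  have h2 : wv 1 (2 : Fin 12) = ((24 : ℝ) • (qq2 -ᵥ qq0)) (2 : Fin 12) := by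
    simp only [Pi.smul_apply, vsub_eq_sub, Pi.sub_apply, smul_eq_mul, wv1v2, qq2v2, qq0v2]
    norm_num
  have h3 : wv 1 (3 : Fin 12) = ((24 : ℝ) • (qq2 -ᵥ qq0)) (3 : Fin 12) := by
    simp only [Pi.smul_apply, vsub_eq_sub, Pi.sub_apply, smul_eq_mul, wv1v3, qq2v3, qq0v3]
    norm_num
  have h4 : wv 1 (4 : Fin 12) = ((24 : ℝ) • (qq2 -ᵥ qq0)) (4 : Fin 12) := by
    simp only [Pi.smul_apply, vsub_eq_sub, Pi.sub_apply, smul_eq_mul, wv1v4, qq2v4, qq0v4]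
    norm_num
  have h5 : wv 1 (5 : Fin 12) = ((24 : ℝ) • (qq2 -ᵥ qq0)) (5 : Fin 12) := by
    simp only [Pi.smul_apply, vsub_eq_sub, Pi.sub_apply, smul_eq_mul, wv1v5, qq2v5, qq0v5]
    norm_num
  have h6 : wv 1 (6 : Fin 12) = ((24 : ℝ) • (qq2 -ᵥ qq0)) (6 : Fin 12) := by
    simp only [Pi.smul_apply, vsub_eq_sub, Pi.sub_apply, smul_eq_mul, wv1v6, qq2v6, qq0v6]
    norm_num
  have h7 : wv 1 (7 : Fin 12) = ((24 : ℝ) • (qq2 -ᵥ qq0)) (7 : Fin 12) := by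
    simp only [Pi.smul_apply, vsub_eq_sub, Pi.sub_apply, smul_eq_mul, wv1v7, qq2v7, qq0v7]
    norm_num
  have h8 : wv 1 (8 : Fin 12) = ((24 : ℝ) • (qq2 -ᵥ qq0)) (8 : Fin 12) := by
    simp only [Pi.smul_apply, vsub_eq_sub, Pi.sub_apply, smul_eq_mul, wv1v8, qq2v8, qq0v8]
    norm_num
  have h9 : wv 1 (9 : Fin 12) = ((24 : ℝ) • (qq2 -ᵥ qq0)) (9 : Fin 12) := by
    simp only [Pi.smul_apply, vsub_eq_sub, Pi.sub_apply, smul_eq_mul, wv1v9, qq2v9, qq0v9]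
    norm_num
  have h10 : wv 1 (10 : Fin 12) = ((24 : ℝ) • (qq2 -ᵥ qq0)) (10 : Fin 12) := by
    simp only [Pi.smul_apply, vsub_eq_sub, Pi.sub_apply, smul_eq_mul, wv1v10, qq2v10, qq0v10]
    norm_num
  have h11 : wv 1 (11 : Fin 12) = ((24 : ℝ) • (qq2 -ᵥ qq0)) (11 : Fin 12) := by
    simp only [Pi.smul_apply, vsub_eq_sub, Pi.sub_apply, smul_eq_mul, wv1v11, qq2v11, qq0v11]
    norm_num
  funext j
  fin_cases j
  exacts [h0, h1, h2, h3, h4, h5, h6, h7, h8, h9, h10, h11]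

lemma wv_diff2 : wv 2 = (24 : ℝ) • (qq3 -ᵥ qq0) := by
  have h0 : wv 2 (0 : Fin 12) = ((24 : ℝ) • (qq3 -ᵥ qq0)) (0 : Fin 12) := by
    simp only [Pi.smul_apply, vsub_eq_sub, Pi.sub_apply, smul_eq_mul, wv2v0, qq3v0, qq0v0]
    norm_num
  have h1 : wv 2 (1 : Fin 12) = ((24 : ℝ) • (qq3 -ᵥ qq0)) (1 : Fin 12) := by
    simp only [Pi.smul_apply, vsub_eq_sub, Pi.sub_apply, smul_eq_mul, wv2v1, qq3v1, qq0v1]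
    norm_num
  have h2 : wv 2 (2 : Fin 12) = ((24 : ℝ) • (qq3 -ᵥ qq0)) (2 : Fin 12) := by
    simp only [Pi.smul_apply, vsub_eq_sub, Pi.sub_apply, smul_eq_mul, wv2v2, qq3v2, qq0v2]
    norm_num
  have h3 : wv 2 (3 : Fin 12) = ((24 : ℝ) • (qq3 -ᵥ qq0)) (3 : Fin 12) := by
    simp only [Pi.smul_apply, vsub_eq_sub, Pi.sub_apply, smul_eq_mul, wv2v3, qq3v3, qq0v3]
    norm_num
  have h4 : wv 2 (4 : Fin 12) = ((24 : ℝ) • (qq3 -ᵥ qq0)) (4 : Fin 12) := by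
    simp only [Pi.smul_apply, vsub_eq_sub, Pi.sub_apply, smul_eq_mul, wv2v4, qq3v4, qq0v4]
    norm_num
  have h5 : wv 2 (5 : Fin 12) = ((24 : ℝ) • (qq3 -ᵥ qq0)) (5 : Fin 12) := by
    simp only [Pi.smul_apply, vsub_eq_sub, Pi.sub_apply, smul_eq_mul, wv2v5, qq3v5, qq0v5]
    norm_num
  have h6 : wv 2 (6 : Fin 12) = ((24 : ℝ) • (qq3 -ᵥ qq0)) (6 : Fin 12) := by
    simp only [Pi.smul_apply, vsub_eq_sub, Pi.sub_apply, smul_eq_mul, wv2v6, qq3v6, qq0v6]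
    norm_num
  have h7 : wv 2 (7 : Fin 12) = ((24 : ℝ) • (qq3 -ᵥ qq0)) (7 : Fin 12) := by
    simp only [Pi.smul_apply, vsub_eq_sub, Pi.sub_apply, smul_eq_mul, wv2v7, qq3v7, qq0v7]
    norm_num
  have h8 : wv 2 (8 : Fin 12) = ((24 : ℝ) • (qq3 -ᵥ qq0)) (8 : Fin 12) := by
    simp only [Pi.smul_apply, vsub_eq_sub, Pi.sub_apply, smul_eq_mul, wv2v8, qq3v8, qq0v8]
    norm_num
  have h9 : wv 2 (9 : Fin 12) = ((24 : ℝ) • (qq3 -ᵥ qq0)) (9 : Fin 12) := by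
    simp only [Pi.smul_apply, vsub_eq_sub, Pi.sub_apply, smul_eq_mul, wv2v9, qq3v9, qq0v9]
    norm_num
  have h10 : wv 2 (10 : Fin 12) = ((24 : ℝ) • (qq3 -ᵥ qq0)) (10 : Fin 12) := by
    simp only [Pi.smul_apply, vsub_eq_sub, Pi.sub_apply, smul_eq_mul, wv2v10, qq3v10, qq0v10]
    norm_num
  have h11 : wv 2 (11 : Fin 12) = ((24 : ℝ) • (qq3 -ᵥ qq0)) (11 : Fin 12) := by
    simp only [Pi.smul_apply, vsub_eq_sub, Pi.sub_apply, smul_eq_mul, wv2v11, qq3v11, qq0v11]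
    norm_num
  funext j
  fin_cases j
  exacts [h0, h1, h2, h3, h4, h5, h6, h7, h8, h9, h10, h11]

lemma wv_diff3 : wv 3 = (24 : ℝ) • (qq4 -ᵥ qq0) := by
  have h0 : wv 3 (0 : Fin 12) = ((24 : ℝ) • (qq4 -ᵥ qq0)) (0 : Fin 12) := by
    simp only [Pi.smul_apply, vsub_eq_sub, Pi.sub_apply, smul_eq_mul, wv3v0, qq4v0, qq0v0]
    norm_num
  have h1 : wv 3 (1 : Fin 12) = ((24 : ℝ) • (qq4 -ᵥ qq0)) (1 : Fin 12) := by
    simp only [Pi.smul_apply, vsub_eq_sub, Pi.sub_apply, smul_eq_mul, wv3v1, qq4v1, qq0v1]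
    norm_num
  have h2 : wv 3 (2 : Fin 12) = ((24 : ℝ) • (qq4 -ᵥ qq0)) (2 : Fin 12) := by
    simp only [Pi.smul_apply, vsub_eq_sub, Pi.sub_apply, smul_eq_mul, wv3v2, qq4v2, qq0v2]
    norm_num
  have h3 : wv 3 (3 : Fin 12) = ((24 : ℝ) • (qq4 -ᵥ qq0)) (3 : Fin 12) := by
    simp only [Pi.smul_apply, vsub_eq_sub, Pi.sub_apply, smul_eq_mul, wv3v3, qq4v3, qq0v3]
    norm_num
  have h4 : wv 3 (4 : Fin 12) = ((24 : ℝ) • (qq4 -ᵥ qq0)) (4 : Fin 12) := by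
    simp only [Pi.smul_apply, vsub_eq_sub, Pi.sub_apply, smul_eq_mul, wv3v4, qq4v4, qq0v4]
    norm_num
  have h5 : wv 3 (5 : Fin 12) = ((24 : ℝ) • (qq4 -ᵥ qq0)) (5 : Fin 12) := by
    simp only [Pi.smul_apply, vsub_eq_sub, Pi.sub_apply, smul_eq_mul, wv3v5, qq4v5, qq0v5]
    norm_num
  have h6 : wv 3 (6 : Fin 12) = ((24 : ℝ) • (qq4 -ᵥ qq0)) (6 : Fin 12) := by
    simp only [Pi.smul_apply, vsub_eq_sub, Pi.sub_apply, smul_eq_mul, wv3v6, qq4v6, qq0v6]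
    norm_num
  have h7 : wv 3 (7 : Fin 12) = ((24 : ℝ) • (qq4 -ᵥ qq0)) (7 : Fin 12) := by
    simp only [Pi.smul_apply, vsub_eq_sub, Pi.sub_apply, smul_eq_mul, wv3v7, qq4v7, qq0v7]
    norm_num
  have h8 : wv 3 (8 : Fin 12) = ((24 : ℝ) • (qq4 -ᵥ qq0)) (8 : Fin 12) := by
    simp only [Pi.smul_apply, vsub_eq_sub, Pi.sub_apply, smul_eq_mul, wv3v8, qq4v8, qq0v8]
    norm_num
  have h9 : wv 3 (9 : Fin 12) = ((24 : ℝ) • (qq4 -ᵥ qq0)) (9 : Fin 12) := by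
    simp only [Pi.smul_apply, vsub_eq_sub, Pi.sub_apply, smul_eq_mul, wv3v9, qq4v9, qq0v9]
    norm_num
  have h10 : wv 3 (10 : Fin 12) = ((24 : ℝ) • (qq4 -ᵥ qq0)) (10 : Fin 12) := by
    simp only [Pi.smul_apply, vsub_eq_sub, Pi.sub_apply, smul_eq_mul, wv3v10, qq4v10, qq0v10]
    norm_num
  have h11 : wv 3 (11 : Fin 12) = ((24 : ℝ) • (qq4 -ᵥ qq0)) (11 : Fin 12) := by
    simp only [Pi.smul_apply, vsub_eq_sub, Pi.sub_apply, smul_eq_mul, wv3v11, qq4v11, qq0v11]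
    norm_num
  funext j
  fin_cases j
  exacts [h0, h1, h2, h3, h4, h5, h6, h7, h8, h9, h10, h11]

lemma wv_diff4 : wv 4 = (24 : ℝ) • (qq5 -ᵥ qq0) := by
  have h0 : wv 4 (0 : Fin 12) = ((24 : ℝ) • (qq5 -ᵥ qq0)) (0 : Fin 12) := by
    simp only [Pi.smul_apply, vsub_eq_sub, Pi.sub_apply, smul_eq_mul, wv4v0, qq5v0, qq0v0]
    norm_num
  have h1 : wv 4 (1 : Fin 12) = ((24 : ℝ) • (qq5 -ᵥ qq0)) (1 : Fin 12) := by
    simp only [Pi.smul_apply, vsub_eq_sub, Pi.sub_apply, smul_eq_mul, wv4v1, qq5v1, qq0v1]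
    norm_num
  have h2 : wv 4 (2 : Fin 12) = ((24 : ℝ) • (qq5 -ᵥ qq0)) (2 : Fin 12) := by
    simp only [Pi.smul_apply, vsub_eq_sub, Pi.sub_apply, smul_eq_mul, wv4v2, qq5v2, qq0v2]
    norm_num
  have h3 : wv 4 (3 : Fin 12) = ((24 : ℝ) • (qq5 -ᵥ qq0)) (3 : Fin 12) := by
    simp only [Pi.smul_apply, vsub_eq_sub, Pi.sub_apply, smul_eq_mul, wv4v3, qq5v3, qq0v3]
    norm_num
  have h4 : wv 4 (4 : Fin 12) = ((24 : ℝ) • (qq5 -ᵥ qq0)) (4 : Fin 12) := by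
    simp only [Pi.smul_apply, vsub_eq_sub, Pi.sub_apply, smul_eq_mul, wv4v4, qq5v4, qq0v4]
    norm_num
  have h5 : wv 4 (5 : Fin 12) = ((24 : ℝ) • (qq5 -ᵥ qq0)) (5 : Fin 12) := by
    simp only [Pi.smul_apply, vsub_eq_sub, Pi.sub_apply, smul_eq_mul, wv4v5, qq5v5, qq0v5]
    norm_num
  have h6 : wv 4 (6 : Fin 12) = ((24 : ℝ) • (qq5 -ᵥ qq0)) (6 : Fin 12) := by
    simp only [Pi.smul_apply, vsub_eq_sub, Pi.sub_apply, smul_eq_mul, wv4v6, qq5v6, qq0v6]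
    norm_num
  have h7 : wv 4 (7 : Fin 12) = ((24 : ℝ) • (qq5 -ᵥ qq0)) (7 : Fin 12) := by
    simp only [Pi.smul_apply, vsub_eq_sub, Pi.sub_apply, smul_eq_mul, wv4v7, qq5v7, qq0v7]
    norm_num
  have h8 : wv 4 (8 : Fin 12) = ((24 : ℝ) • (qq5 -ᵥ qq0)) (8 : Fin 12) := by
    simp only [Pi.smul_apply, vsub_eq_sub, Pi.sub_apply, smul_eq_mul, wv4v8, qq5v8, qq0v8]
    norm_num
  have h9 : wv 4 (9 : Fin 12) = ((24 : ℝ) • (qq5 -ᵥ qq0)) (9 : Fin 12) := by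
    simp only [Pi.smul_apply, vsub_eq_sub, Pi.sub_apply, smul_eq_mul, wv4v9, qq5v9, qq0v9]
    norm_num
  have h10 : wv 4 (10 : Fin 12) = ((24 : ℝ) • (qq5 -ᵥ qq0)) (10 : Fin 12) := by
    simp only [Pi.smul_apply, vsub_eq_sub, Pi.sub_apply, smul_eq_mul, wv4v10, qq5v10, qq0v10]
    norm_num
  have h11 : wv 4 (11 : Fin 12) = ((24 : ℝ) • (qq5 -ᵥ qq0)) (11 : Fin 12) := by
    simp only [Pi.smul_apply, vsub_eq_sub, Pi.sub_apply, smul_eq_mul, wv4v11, qq5v11, qq0v11]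
    norm_num
  funext j
  fin_cases j
  exacts [h0, h1, h2, h3, h4, h5, h6, h7, h8, h9, h10, h11]

lemma wv_diff5 : wv 5 = (24 : ℝ) • (qq6 -ᵥ qq0) := by
  have h0 : wv 5 (0 : Fin 12) = ((24 : ℝ) • (qq6 -ᵥ qq0)) (0 : Fin 12) := by
    simp only [Pi.smul_apply, vsub_eq_sub, Pi.sub_apply, smul_eq_mul, wv5v0, qq6v0, qq0v0]
    norm_num
  have h1 : wv 5 (1 : Fin 12) = ((24 : ℝ) • (qq6 -ᵥ qq0)) (1 : Fin 12) := by
    simp only [Pi.smul_apply, vsub_eq_sub, Pi.sub_apply, smul_eq_mul, wv5v1, qq6v1, qq0v1]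
    norm_num
  have h2 : wv 5 (2 : Fin 12) = ((24 : ℝ) • (qq6 -ᵥ qq0)) (2 : Fin 12) := by
    simp only [Pi.smul_apply, vsub_eq_sub, Pi.sub_apply, smul_eq_mul, wv5v2, qq6v2, qq0v2]
    norm_num
  have h3 : wv 5 (3 : Fin 12) = ((24 : ℝ) • (qq6 -ᵥ qq0)) (3 : Fin 12) := by
    simp only [Pi.smul_apply, vsub_eq_sub, Pi.sub_apply, smul_eq_mul, wv5v3, qq6v3, qq0v3]
    norm_num
  have h4 : wv 5 (4 : Fin 12) = ((24 : ℝ) • (qq6 -ᵥ qq0)) (4 : Fin 12) := by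
    simp only [Pi.smul_apply, vsub_eq_sub, Pi.sub_apply, smul_eq_mul, wv5v4, qq6v4, qq0v4]
    norm_num
  have h5 : wv 5 (5 : Fin 12) = ((24 : ℝ) • (qq6 -ᵥ qq0)) (5 : Fin 12) := by
    simp only [Pi.smul_apply, vsub_eq_sub, Pi.sub_apply, smul_eq_mul, wv5v5, qq6v5, qq0v5]
    norm_num
  have h6 : wv 5 (6 : Fin 12) = ((24 : ℝ) • (qq6 -ᵥ qq0)) (6 : Fin 12) := by
    simp only [Pi.smul_apply, vsub_eq_sub, Pi.sub_apply, smul_eq_mul, wv5v6, qq6v6, qq0v6]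
    norm_num
  have h7 : wv 5 (7 : Fin 12) = ((24 : ℝ) • (qq6 -ᵥ qq0)) (7 : Fin 12) := by
    simp only [Pi.smul_apply, vsub_eq_sub, Pi.sub_apply, smul_eq_mul, wv5v7, qq6v7, qq0v7]
    norm_num
  have h8 : wv 5 (8 : Fin 12) = ((24 : ℝ) • (qq6 -ᵥ qq0)) (8 : Fin 12) := by
    simp only [Pi.smul_apply, vsub_eq_sub, Pi.sub_apply, smul_eq_mul, wv5v8, qq6v8, qq0v8]
    norm_num
  have h9 : wv 5 (9 : Fin 12) = ((24 : ℝ) • (qq6 -ᵥ qq0)) (9 : Fin 12) := by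
    simp only [Pi.smul_apply, vsub_eq_sub, Pi.sub_apply, smul_eq_mul, wv5v9, qq6v9, qq0v9]
    norm_num
  have h10 : wv 5 (10 : Fin 12) = ((24 : ℝ) • (qq6 -ᵥ qq0)) (10 : Fin 12) := by
    simp only [Pi.smul_apply, vsub_eq_sub, Pi.sub_apply, smul_eq_mul, wv5v10, qq6v10, qq0v10]
    norm_num
  have h11 : wv 5 (11 : Fin 12) = ((24 : ℝ) • (qq6 -ᵥ qq0)) (11 : Fin 12) := by
    simp only [Pi.smul_apply, vsub_eq_sub, Pi.sub_apply, smul_eq_mul, wv5v11, qq6v11, qq0v11]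
    norm_num
  funext j
  fin_cases j
  exacts [h0, h1, h2, h3, h4, h5, h6, h7, h8, h9, h10, h11]

lemma wv_diff6 : wv 6 = (24 : ℝ) • (qq7 -ᵥ qq0) := by
  have h0 : wv 6 (0 : Fin 12) = ((24 : ℝ) • (qq7 -ᵥ qq0)) (0 : Fin 12) := by
    simp only [Pi.smul_apply, vsub_eq_sub, Pi.sub_apply, smul_eq_mul, wv6v0, qq7v0, qq0v0]
    norm_num
  have h1 : wv 6 (1 : Fin 12) = ((24 : ℝ) • (qq7 -ᵥ qq0)) (1 : Fin 12) := by
    simp only [Pi.smul_apply, vsub_eq_sub, Pi.sub_apply, smul_eq_mul, wv6v1, qq7v1, qq0v1]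
    norm_num
  have h2 : wv 6 (2 : Fin 12) = ((24 : ℝ) • (qq7 -ᵥ qq0)) (2 : Fin 12) := by
    simp only [Pi.smul_apply, vsub_eq_sub, Pi.sub_apply, smul_eq_mul, wv6v2, qq7v2, qq0v2]
    norm_num
  have h3 : wv 6 (3 : Fin 12) = ((24 : ℝ) • (qq7 -ᵥ qq0)) (3 : Fin 12) := by
    simp only [Pi.smul_apply, vsub_eq_sub, Pi.sub_apply, smul_eq_mul, wv6v3, qq7v3, qq0v3]
    norm_num
  have h4 : wv 6 (4 : Fin 12) = ((24 : ℝ) • (qq7 -ᵥ qq0)) (4 : Fin 12) := by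
    simp only [Pi.smul_apply, vsub_eq_sub, Pi.sub_apply, smul_eq_mul, wv6v4, qq7v4, qq0v4]
    norm_num
  have h5 : wv 6 (5 : Fin 12) = ((24 : ℝ) • (qq7 -ᵥ qq0)) (5 : Fin 12) := by
    simp only [Pi.smul_apply, vsub_eq_sub, Pi.sub_apply, smul_eq_mul, wv6v5, qq7v5, qq0v5]
    norm_num
  have h6 : wv 6 (6 : Fin 12) = ((24 : ℝ) • (qq7 -ᵥ qq0)) (6 : Fin 12) := by
    simp only [Pi.smul_apply, vsub_eq_sub, Pi.sub_apply, smul_eq_mul, wv6v6, qq7v6, qq0v6]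
    norm_num
  have h7 : wv 6 (7 : Fin 12) = ((24 : ℝ) • (qq7 -ᵥ qq0)) (7 : Fin 12) := by
    simp only [Pi.smul_apply, vsub_eq_sub, Pi.sub_apply, smul_eq_mul, wv6v7, qq7v7, qq0v7]
    norm_num
  have h8 : wv 6 (8 : Fin 12) = ((24 : ℝ) • (qq7 -ᵥ qq0)) (8 : Fin 12) := by
    simp only [Pi.smul_apply, vsub_eq_sub, Pi.sub_apply, smul_eq_mul, wv6v8, qq7v8, qq0v8]
    norm_num
  have h9 : wv 6 (9 : Fin 12) = ((24 : ℝ) • (qq7 -ᵥ qq0)) (9 : Fin 12) := by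
    simp only [Pi.smul_apply, vsub_eq_sub, Pi.sub_apply, smul_eq_mul, wv6v9, qq7v9, qq0v9]
    norm_num
  have h10 : wv 6 (10 : Fin 12) = ((24 : ℝ) • (qq7 -ᵥ qq0)) (10 : Fin 12) := by
    simp only [Pi.smul_apply, vsub_eq_sub, Pi.sub_apply, smul_eq_mul, wv6v10, qq7v10, qq0v10]
    norm_num
  have h11 : wv 6 (11 : Fin 12) = ((24 : ℝ) • (qq7 -ᵥ qq0)) (11 : Fin 12) := by
    simp only [Pi.smul_apply, vsub_eq_sub, Pi.sub_apply, smul_eq_mul, wv6v11, qq7v11, qq0v11]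
    norm_num
  funext j
  fin_cases j
  exacts [h0, h1, h2, h3, h4, h5, h6, h7, h8, h9, h10, h11]

lemma wv_diff7 : wv 7 = (24 : ℝ) • (qq8 -ᵥ qq0) := by
  have h0 : wv 7 (0 : Fin 12) = ((24 : ℝ) • (qq8 -ᵥ qq0)) (0 : Fin 12) := by
    simp only [Pi.smul_apply, vsub_eq_sub, Pi.sub_apply, smul_eq_mul, wv7v0, qq8v0, qq0v0]
    norm_num
  have h1 : wv 7 (1 : Fin 12) = ((24 : ℝ) • (qq8 -ᵥ qq0)) (1 : Fin 12) := by
    simp only [Pi.smul_apply, vsub_eq_sub, Pi.sub_apply, smul_eq_mul, wv7v1, qq8v1, qq0v1]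
    norm_num
  have h2 : wv 7 (2 : Fin 12) = ((24 : ℝ) • (qq8 -ᵥ qq0)) (2 : Fin 12) := by
    simp only [Pi.smul_apply, vsub_eq_sub, Pi.sub_apply, smul_eq_mul, wv7v2, qq8v2, qq0v2]
    norm_num
  have h3 : wv 7 (3 : Fin 12) = ((24 : ℝ) • (qq8 -ᵥ qq0)) (3 : Fin 12) := by
    simp only [Pi.smul_apply, vsub_eq_sub, Pi.sub_apply, smul_eq_mul, wv7v3, qq8v3, qq0v3]
    norm_num
  have h4 : wv 7 (4 : Fin 12) = ((24 : ℝ) • (qq8 -ᵥ qq0)) (4 : Fin 12) := by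
    simp only [Pi.smul_apply, vsub_eq_sub, Pi.sub_apply, smul_eq_mul, wv7v4, qq8v4, qq0v4]
    norm_num
  have h5 : wv 7 (5 : Fin 12) = ((24 : ℝ) • (qq8 -ᵥ qq0)) (5 : Fin 12) := by
    simp only [Pi.smul_apply, vsub_eq_sub, Pi.sub_apply, smul_eq_mul, wv7v5, qq8v5, qq0v5]
    norm_num
  have h6 : wv 7 (6 : Fin 12) = ((24 : ℝ) • (qq8 -ᵥ qq0)) (6 : Fin 12) := by
    simp only [Pi.smul_apply, vsub_eq_sub, Pi.sub_apply, smul_eq_mul, wv7v6, qq8v6, qq0v6]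
    norm_num
  have h7 : wv 7 (7 : Fin 12) = ((24 : ℝ) • (qq8 -ᵥ qq0)) (7 : Fin 12) := by
    simp only [Pi.smul_apply, vsub_eq_sub, Pi.sub_apply, smul_eq_mul, wv7v7, qq8v7, qq0v7]
    norm_num
  have h8 : wv 7 (8 : Fin 12) = ((24 : ℝ) • (qq8 -ᵥ qq0)) (8 : Fin 12) := by
    simp only [Pi.smul_apply, vsub_eq_sub, Pi.sub_apply, smul_eq_mul, wv7v8, qq8v8, qq0v8]
    norm_num
  have h9 : wv 7 (9 : Fin 12) = ((24 : ℝ) • (qq8 -ᵥ qq0)) (9 : Fin 12) := by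
    simp only [Pi.smul_apply, vsub_eq_sub, Pi.sub_apply, smul_eq_mul, wv7v9, qq8v9, qq0v9]
    norm_num
  have h10 : wv 7 (10 : Fin 12) = ((24 : ℝ) • (qq8 -ᵥ qq0)) (10 : Fin 12) := by
    simp only [Pi.smul_apply, vsub_eq_sub, Pi.sub_apply, smul_eq_mul, wv7v10, qq8v10, qq0v10]
    norm_num
  have h11 : wv 7 (11 : Fin 12) = ((24 : ℝ) • (qq8 -ᵥ qq0)) (11 : Fin 12) := by
    simp only [Pi.smul_apply, vsub_eq_sub, Pi.sub_apply, smul_eq_mul, wv7v11, qq8v11, qq0v11]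
    norm_num
  funext j
  fin_cases j
  exacts [h0, h1, h2, h3, h4, h5, h6, h7, h8, h9, h10, h11]

lemma wv_mem :
    Set.range wv ⊆
      (vectorSpan ℝ {x ∈ burniatPolytope | x 11 + x 10 + x 1 ≤ 1 ∧ x 7 + x 6 + x 9 ≤ 1} :
        Set (Fin 12 → ℝ)) := by
  have m0 : wv 0 ∈
      (vectorSpan ℝ {x ∈ burniatPolytope | x 11 + x 10 + x 1 ≤ 1 ∧ x 7 + x 6 + x 9 ≤ 1} :
        Set (Fin 12 → ℝ)) := by
    rw [wv_diff0]
    exact Submodule.smul_mem _ _ (vsub_mem_vectorSpan ℝ hqq1 hqq0)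
  have m1 : wv 1 ∈
      (vectorSpan ℝ {x ∈ burniatPolytope | x 11 + x 10 + x 1 ≤ 1 ∧ x 7 + x 6 + x 9 ≤ 1} :
        Set (Fin 12 → ℝ)) := by
    rw [wv_diff1]
    exact Submodule.smul_mem _ _ (vsub_mem_vectorSpan ℝ hqq2 hqq0)
  have m2 : wv 2 ∈
      (vectorSpan ℝ {x ∈ burniatPolytope | x 11 + x 10 + x 1 ≤ 1 ∧ x 7 + x 6 + x 9 ≤ 1} :
        Set (Fin 12 → ℝ)) := by
    rw [wv_diff2]
    exact Submodule.smul_mem _ _ (vsub_mem_vectorSpan ℝ hqq3 hqq0)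
  have m3 : wv 3 ∈
      (vectorSpan ℝ {x ∈ burniatPolytope | x 11 + x 10 + x 1 ≤ 1 ∧ x 7 + x 6 + x 9 ≤ 1} :
        Set (Fin 12 → ℝ)) := by
    rw [wv_diff3]
    exact Submodule.smul_mem _ _ (vsub_mem_vectorSpan ℝ hqq4 hqq0)
  have m4 : wv 4 ∈
      (vectorSpan ℝ {x ∈ burniatPolytope | x 11 + x 10 + x 1 ≤ 1 ∧ x 7 + x 6 + x 9 ≤ 1} :
        Set (Fin 12 → ℝ)) := by
    rw [wv_diff4]
    exact Submodule.smul_mem _ _ (vsub_mem_vectorSpan ℝ hqq5 hqq0)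
  have m5 : wv 5 ∈
      (vectorSpan ℝ {x ∈ burniatPolytope | x 11 + x 10 + x 1 ≤ 1 ∧ x 7 + x 6 + x 9 ≤ 1} :
        Set (Fin 12 → ℝ)) := by
    rw [wv_diff5]
    exact Submodule.smul_mem _ _ (vsub_mem_vectorSpan ℝ hqq6 hqq0)
  have m6 : wv 6 ∈
      (vectorSpan ℝ {x ∈ burniatPolytope | x 11 + x 10 + x 1 ≤ 1 ∧ x 7 + x 6 + x 9 ≤ 1} :
        Set (Fin 12 → ℝ)) := by
    rw [wv_diff6]
    exact Submodule.smul_mem _ _ (vsub_mem_vectorSpan ℝ hqq7 hqq0)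
  have m7 : wv 7 ∈
      (vectorSpan ℝ {x ∈ burniatPolytope | x 11 + x 10 + x 1 ≤ 1 ∧ x 7 + x 6 + x 9 ≤ 1} :
        Set (Fin 12 → ℝ)) := by
    rw [wv_diff7]
    exact Submodule.smul_mem _ _ (vsub_mem_vectorSpan ℝ hqq8 hqq0)
  rintro _ ⟨k, rfl⟩
  fin_cases k
  exacts [m0, m1, m2, m3, m4, m5, m6, m7]

lemma diff_mem {x y : Fin 12 → ℝ}
    (hx : x ∈ {x ∈ burniatPolytope | x 11 + x 10 + x 1 ≤ 1 ∧ x 7 + x 6 + x 9 ≤ 1})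
    (hy : y ∈ {x ∈ burniatPolytope | x 11 + x 10 + x 1 ≤ 1 ∧ x 7 + x 6 + x 9 ≤ 1}) :
    x - y ∈ Submodule.span ℝ (Set.range wv) := by
  obtain ⟨⟨-, hxs, hx3, hx7, hx11⟩, -, -⟩ := hx
  obtain ⟨⟨-, hys, hy3, hy7, hy11⟩, -, -⟩ := hy
  have hrep : x - y = (x 0 - y 0) • wv 0 + (x 2 - y 2) • wv 1 + (x 4 - y 4) • wv 2 + (x 5 - y 5) • wv 3 + (x 6 - y 6) • wv 4 + (x 8 - y 8) • wv 5 + (x 9 - y 9) • wv 6 + (x 10 - y 10) • wv 7 := by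
    have h0 : (x - y) (0 : Fin 12) = ((x 0 - y 0) • wv 0 + (x 2 - y 2) • wv 1 + (x 4 - y 4) • wv 2 + (x 5 - y 5) • wv 3 + (x 6 - y 6) • wv 4 + (x 8 - y 8) • wv 5 + (x 9 - y 9) • wv 6 + (x 10 - y 10) • wv 7) (0 : Fin 12) := by
      simp only [Pi.add_apply, Pi.smul_apply, Pi.sub_apply, smul_eq_mul, wv0v0, wv1v0, wv2v0, wv3v0, wv4v0, wv5v0, wv6v0, wv7v0]
      linarith
    have h1 : (x - y) (1 : Fin 12) = ((x 0 - y 0) • wv 0 + (x 2 - y 2) • wv 1 + (x 4 - y 4) • wv 2 + (x 5 - y 5) • wv 3 + (x 6 - y 6) • wv 4 + (x 8 - y 8) • wv 5 + (x 9 - y 9) • wv 6 + (x 10 - y 10) • wv 7) (1 : Fin 12) := by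
      simp only [Pi.add_apply, Pi.smul_apply, Pi.sub_apply, smul_eq_mul, wv0v1, wv1v1, wv2v1, wv3v1, wv4v1, wv5v1, wv6v1, wv7v1]
      linarith
    have h2 : (x - y) (2 : Fin 12) = ((x 0 - y 0) • wv 0 + (x 2 - y 2) • wv 1 + (x 4 - y 4) • wv 2 + (x 5 - y 5) • wv 3 + (x 6 - y 6) • wv 4 + (x 8 - y 8) • wv 5 + (x 9 - y 9) • wv 6 + (x 10 - y 10) • wv 7) (2 : Fin 12) := by
      simp only [Pi.add_apply, Pi.smul_apply, Pi.sub_apply, smul_eq_mul, wv0v2, wv1v2, wv2v2, wv3v2, wv4v2, wv5v2, wv6v2, wv7v2]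
      linarith
    have h3 : (x - y) (3 : Fin 12) = ((x 0 - y 0) • wv 0 + (x 2 - y 2) • wv 1 + (x 4 - y 4) • wv 2 + (x 5 - y 5) • wv 3 + (x 6 - y 6) • wv 4 + (x 8 - y 8) • wv 5 + (x 9 - y 9) • wv 6 + (x 10 - y 10) • wv 7) (3 : Fin 12) := by
      simp only [Pi.add_apply, Pi.smul_apply, Pi.sub_apply, smul_eq_mul, wv0v3, wv1v3, wv2v3, wv3v3, wv4v3, wv5v3, wv6v3, wv7v3]
      linarith
    have h4 : (x - y) (4 : Fin 12) = ((x 0 - y 0) • wv 0 + (x 2 - y 2) • wv 1 + (x 4 - y 4) • wv 2 + (x 5 - y 5) • wv 3 + (x 6 - y 6) • wv 4 + (x 8 - y 8) • wv 5 + (x 9 - y 9) • wv 6 + (x 10 - y 10) • wv 7) (4 : Fin 12) := by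
      simp only [Pi.add_apply, Pi.smul_apply, Pi.sub_apply, smul_eq_mul, wv0v4, wv1v4, wv2v4, wv3v4, wv4v4, wv5v4, wv6v4, wv7v4]
      linarith
    have h5 : (x - y) (5 : Fin 12) = ((x 0 - y 0) • wv 0 + (x 2 - y 2) • wv 1 + (x 4 - y 4) • wv 2 + (x 5 - y 5) • wv 3 + (x 6 - y 6) • wv 4 + (x 8 - y 8) • wv 5 + (x 9 - y 9) • wv 6 + (x 10 - y 10) • wv 7) (5 : Fin 12) := by
      simp only [Pi.add_apply, Pi.smul_apply, Pi.sub_apply, smul_eq_mul, wv0v5, wv1v5, wv2v5, wv3v5, wv4v5, wv5v5, wv6v5, wv7v5]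
      linarith
    have h6 : (x - y) (6 : Fin 12) = ((x 0 - y 0) • wv 0 + (x 2 - y 2) • wv 1 + (x 4 - y 4) • wv 2 + (x 5 - y 5) • wv 3 + (x 6 - y 6) • wv 4 + (x 8 - y 8) • wv 5 + (x 9 - y 9) • wv 6 + (x 10 - y 10) • wv 7) (6 : Fin 12) := by
      simp only [Pi.add_apply, Pi.smul_apply, Pi.sub_apply, smul_eq_mul, wv0v6, wv1v6, wv2v6, wv3v6, wv4v6, wv5v6, wv6v6, wv7v6]
      linarith
    have h7 : (x - y) (7 : Fin 12) = ((x 0 - y 0) • wv 0 + (x 2 - y 2) • wv 1 + (x 4 - y 4) • wv 2 + (x 5 - y 5) • wv 3 + (x 6 - y 6) • wv 4 + (x 8 - y 8) • wv 5 + (x 9 - y 9) • wv 6 + (x 10 - y 10) • wv 7) (7 : Fin 12) := by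
      simp only [Pi.add_apply, Pi.smul_apply, Pi.sub_apply, smul_eq_mul, wv0v7, wv1v7, wv2v7, wv3v7, wv4v7, wv5v7, wv6v7, wv7v7]
      linarith
    have h8 : (x - y) (8 : Fin 12) = ((x 0 - y 0) • wv 0 + (x 2 - y 2) • wv 1 + (x 4 - y 4) • wv 2 + (x 5 - y 5) • wv 3 + (x 6 - y 6) • wv 4 + (x 8 - y 8) • wv 5 + (x 9 - y 9) • wv 6 + (x 10 - y 10) • wv 7) (8 : Fin 12) := by
      simp only [Pi.add_apply, Pi.smul_apply, Pi.sub_apply, smul_eq_mul, wv0v8, wv1v8, wv2v8, wv3v8, wv4v8, wv5v8, wv6v8, wv7v8]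
      linarith
    have h9 : (x - y) (9 : Fin 12) = ((x 0 - y 0) • wv 0 + (x 2 - y 2) • wv 1 + (x 4 - y 4) • wv 2 + (x 5 - y 5) • wv 3 + (x 6 - y 6) • wv 4 + (x 8 - y 8) • wv 5 + (x 9 - y 9) • wv 6 + (x 10 - y 10) • wv 7) (9 : Fin 12) := by
      simp only [Pi.add_apply, Pi.smul_apply, Pi.sub_apply, smul_eq_mul, wv0v9, wv1v9, wv2v9, wv3v9, wv4v9, wv5v9, wv6v9, wv7v9]
      linarith
    have h10 : (x - y) (10 : Fin 12) = ((x 0 - y 0) • wv 0 + (x 2 - y 2) • wv 1 + (x 4 - y 4) • wv 2 + (x 5 - y 5) • wv 3 + (x 6 - y 6) • wv 4 + (x 8 - y 8) • wv 5 + (x 9 - y 9) • wv 6 + (x 10 - y 10) • wv 7) (10 : Fin 12) := by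
      simp only [Pi.add_apply, Pi.smul_apply, Pi.sub_apply, smul_eq_mul, wv0v10, wv1v10, wv2v10, wv3v10, wv4v10, wv5v10, wv6v10, wv7v10]
      linarith
    have h11 : (x - y) (11 : Fin 12) = ((x 0 - y 0) • wv 0 + (x 2 - y 2) • wv 1 + (x 4 - y 4) • wv 2 + (x 5 - y 5) • wv 3 + (x 6 - y 6) • wv 4 + (x 8 - y 8) • wv 5 + (x 9 - y 9) • wv 6 + (x 10 - y 10) • wv 7) (11 : Fin 12) := by
      simp only [Pi.add_apply, Pi.smul_apply, Pi.sub_apply, smul_eq_mul, wv0v11, wv1v11, wv2v11, wv3v11, wv4v11, wv5v11, wv6v11, wv7v11]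
      linarith
    funext j
    fin_cases j
    exacts [h0, h1, h2, h3, h4, h5, h6, h7, h8, h9, h10, h11]
  rw [hrep]
  have m : ∀ k : Fin 8, wv k ∈ Submodule.span ℝ (Set.range wv) :=
    fun k => Submodule.subset_span ⟨k, rfl⟩
  exact Submodule.add_mem _ (Submodule.add_mem _ (Submodule.add_mem _ (Submodule.add_mem _ (Submodule.add_mem _ (Submodule.add_mem _ (Submodule.add_mem _ (Submodule.smul_mem _ _ (m 0)) (Submodule.smul_mem _ _ (m 1))) (Submodule.smul_mem _ _ (m 2))) (Submodule.smul_mem _ _ (m 3))) (Submodule.smul_mem _ _ (m 4))) (Submodule.smul_mem _ _ (m 5))) (Submodule.smul_mem _ _ (m 6))) (Submodule.smul_mem _ _ (m 7))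

lemma wv_li : LinearIndependent ℝ wv := by
  rw [Fintype.linearIndependent_iff]
  intro g hg
  have h0 := congrFun hg (0 : Fin 12)
  simp only [Finset.sum_apply, Pi.smul_apply, smul_eq_mul, Fin.sum_univ_eight,
    wv0v0, wv1v0, wv2v0, wv3v0, wv4v0, wv5v0, wv6v0, wv7v0, Pi.zero_apply, mul_one, mul_zero,
    mul_neg, add_zero, zero_add] at h0
  have h1 := congrFun hg (2 : Fin 12)
  simp only [Finset.sum_apply, Pi.smul_apply, smul_eq_mul, Fin.sum_univ_eight,
    wv0v2, wv1v2, wv2v2, wv3v2, wv4v2, wv5v2, wv6v2, wv7v2, Pi.zero_apply, mul_one, mul_zero,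
    mul_neg, add_zero, zero_add] at h1
  have h2 := congrFun hg (4 : Fin 12)
  simp only [Finset.sum_apply, Pi.smul_apply, smul_eq_mul, Fin.sum_univ_eight,
    wv0v4, wv1v4, wv2v4, wv3v4, wv4v4, wv5v4, wv6v4, wv7v4, Pi.zero_apply, mul_one, mul_zero,
    mul_neg, add_zero, zero_add] at h2
  have h3 := congrFun hg (5 : Fin 12)
  simp only [Finset.sum_apply, Pi.smul_apply, smul_eq_mul, Fin.sum_univ_eight,
    wv0v5, wv1v5, wv2v5, wv3v5, wv4v5, wv5v5, wv6v5, wv7v5, Pi.zero_apply, mul_one, mul_zero,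
    mul_neg, add_zero, zero_add] at h3
  have h4 := congrFun hg (6 : Fin 12)
  simp only [Finset.sum_apply, Pi.smul_apply, smul_eq_mul, Fin.sum_univ_eight,
    wv0v6, wv1v6, wv2v6, wv3v6, wv4v6, wv5v6, wv6v6, wv7v6, Pi.zero_apply, mul_one, mul_zero,
    mul_neg, add_zero, zero_add] at h4
  have h5 := congrFun hg (8 : Fin 12)
  simp only [Finset.sum_apply, Pi.smul_apply, smul_eq_mul, Fin.sum_univ_eight,
    wv0v8, wv1v8, wv2v8, wv3v8, wv4v8, wv5v8, wv6v8, wv7v8, Pi.zero_apply, mul_one, mul_zero,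
    mul_neg, add_zero, zero_add] at h5
  have h6 := congrFun hg (9 : Fin 12)
  simp only [Finset.sum_apply, Pi.smul_apply, smul_eq_mul, Fin.sum_univ_eight,
    wv0v9, wv1v9, wv2v9, wv3v9, wv4v9, wv5v9, wv6v9, wv7v9, Pi.zero_apply, mul_one, mul_zero,
    mul_neg, add_zero, zero_add] at h6
  have h7 := congrFun hg (10 : Fin 12)
  simp only [Finset.sum_apply, Pi.smul_apply, smul_eq_mul, Fin.sum_univ_eight,
    wv0v10, wv1v10, wv2v10, wv3v10, wv4v10, wv5v10, wv6v10, wv7v10, Pi.zero_apply, mul_one, mul_zero,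
    mul_neg, add_zero, zero_add] at h7
  intro i
  fin_cases i
  exacts [h0, h1, h2, h3, h4, h5, h6, h7]

/-- row 4 of the table of maximal-dimensional matroid-polytope
intersections: the subset of the Burniat polytope cut out by `c₃+c₂+a₁ ≤ 1` and `b₃+b₂+c₁ ≤ 1`
has affine dimension 8, i.e. it is a full-dimensional subpolytope of `Δ_bur`;
equivalently, `Δ_bur` contains a point satisfying all twelve inequality
constraints `0 < a_i, b_i, c_i < 1/2` strictly together with the strict form of
the cutting inequalit(y/ies). -/
theorem burniat_row4_full_dimensional :
    Module.finrank ℝ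
      (vectorSpan ℝ {x ∈ burniatPolytope | x 11 + x 10 + x 1 ≤ 1 ∧ x 7 + x 6 + x 9 ≤ 1}) = 8 ∧
    ∃ x ∈ burniatPolytope, (∀ i : Fin 12, 0 < x i ∧ x i < 1/2) ∧
      (x 11 + x 10 + x 1 < 1 ∧ x 7 + x 6 + x 9 < 1) := by
  constructor
  · have hset : vectorSpan ℝ
        {x ∈ burniatPolytope | x 11 + x 10 + x 1 ≤ 1 ∧ x 7 + x 6 + x 9 ≤ 1} =
        Submodule.span ℝ (Set.range wv) := by
      refine le_antisymm ?_ (Submodule.span_le.2 wv_mem)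
      rw [vectorSpan_def]
      refine Submodule.span_le.2 ?_
      rintro d ⟨x, hx, y, hy, rfl⟩
      exact diff_mem hx hy
    rw [hset, finrank_span_eq_card wv_li, Fintype.card_fin]
  · refine ⟨qq0, hqq0.1, fun i => ?_, ?_, ?_⟩
    · fin_cases i <;> norm_num [qq0]
    · norm_num [qq0v11, qq0v10, qq0v1]
    · norm_num [qq0v7, qq0v6, qq0v9]
end

section
/- The subset of the Burniat polytope Δ_bur cut out by the single inequality a_1+a_2+b_1+b_2+c_1+c_2 ≤ 2 (row 7 of the table of maximal-dimensional matroid-polytope intersections) has affine dimension 8, i.e., it is a full-dimensional subpolytope of Δ_bur; equivalently, Δ_bur contains a point satisfying all twelve inequality constraints 0 < a_i,b_i,c_i < 1/2 strictly together with a_1+a_2+b_1+b_2+c_1+c_2 < 2. -/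
/-- Interior point of the row-7 subpolytope. -/
noncomputable def burPt : Fin 12 → ℝ := fun i =>
  match i.val with
  | 0 => 5/12 | 1 => 1/4 | 11 => 5/12 | _ => 1/3

/-- Eight direction vectors spanning the tangent space. -/
noncomputable def burV : Fin 8 → Fin 12 → ℝ := fun k i =>
  match k.val, i.val with
  | 0, 0 => 1 | 0, 3 => -1 | 0, 7 => 1 | 0, 10 => -1 | 0, 11 => 1
  | 1, 1 => 1 | 1, 3 => -1 | 1, 7 => 1 | 1, 10 => -1
  | 2, 2 => 1 | 2, 3 => -1 | 2, 7 => 1 | 2, 10 => -1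
  | 3, 4 => 1 | 3, 10 => -1 | 3, 11 => 1
  | 4, 5 => 1 | 4, 3 => -1 | 4, 10 => -1 | 4, 11 => 1
  | 5, 6 => 1 | 5, 3 => -1 | 5, 10 => -1 | 5, 11 => 1
  | 6, 8 => 1 | 6, 7 => 1 | 6, 10 => -1
  | 7, 9 => 1 | 7, 10 => -1
  | _, _ => 0

/-- Perturbed points. -/
noncomputable def burQ : Fin 8 → Fin 12 → ℝ := fun k i => burPt i + (1/100) * burV k i

/-- The linear map whose kernel contains the vector span. -/
noncomputable def burF : (Fin 12 → ℝ) →ₗ[ℝ] (Fin 4 → ℝ) where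
  toFun x := fun j =>
    match j.val with
    | 0 => (x 0 + x 4 + x 8) + (x 1 + x 5 + x 9) + (x 2 + x 6 + x 10)
    | 1 => x 3 - (x 8 + x 9 + x 10 + x 4)
    | 2 => x 7 - (x 0 + x 1 + x 2 + x 8)
    | _ => x 11 - (x 4 + x 5 + x 6 + x 0)
  map_add' x y := by funext j; fin_cases j <;> simp <;> ring
  map_smul' c x := by funext j; fin_cases j <;> simp <;> ring

set_option maxHeartbeats 2000000 in
/-- row 7 of the table of maximal-dimensional matroid-polytope
intersections: the subset of the Burniat polytope cut out by `a₁+a₂+b₁+b₂+c₁+c₂ ≤ 2`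
has affine dimension 8, i.e. it is a full-dimensional subpolytope of `Δ_bur`;
equivalently, `Δ_bur` contains a point satisfying all twelve inequality
constraints `0 < a_i, b_i, c_i < 1/2` strictly together with the strict form of
the cutting inequalit(y/ies). -/
theorem burniat_row7_full_dimensional :
    Module.finrank ℝ
      (vectorSpan ℝ {x ∈ burniatPolytope | x 1 + x 2 + x 5 + x 6 + x 9 + x 10 ≤ 2}) = 8 ∧
    ∃ x ∈ burniatPolytope, (∀ i : Fin 12, 0 < x i ∧ x i < 1/2) ∧
      (x 1 + x 2 + x 5 + x 6 + x 9 + x 10 < 2) := by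
  set S : Set (Fin 12 → ℝ) :=
    {x ∈ burniatPolytope | x 1 + x 2 + x 5 + x 6 + x 9 + x 10 ≤ 2} with hS
  have hptB : burPt ∈ burniatPolytope := by
    refine ⟨?_, by norm_num [burPt], by norm_num [burPt], by norm_num [burPt],
      by norm_num [burPt]⟩
    intro i; fin_cases i <;> norm_num [burPt]
  have hpt : burPt ∈ S := ⟨hptB, by norm_num [burPt]⟩
  have hq : ∀ k : Fin 8, burQ k ∈ S := by
    intro k
    fin_cases k <;>
      exact ⟨⟨by intro i; fin_cases i <;> norm_num [burQ, burPt, burV],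
        by norm_num [burQ, burPt, burV], by norm_num [burQ, burPt, burV],
        by norm_num [burQ, burPt, burV], by norm_num [burQ, burPt, burV]⟩,
        by norm_num [burQ, burPt, burV]⟩
  -- upper bound: vectorSpan ⊆ ker burF
  have hsurj : Function.Surjective burF := by
    intro y
    refine ⟨fun i => match i.val with
      | 1 => y 0 | 3 => y 1 | 7 => y 2 + y 0 | 11 => y 3 | _ => 0, ?_⟩
    funext j
    fin_cases j <;> simp [burF]
  have hker : Module.finrank ℝ (LinearMap.ker burF) = 8 := by
    have h1 := burF.finrank_range_add_finrank_ker
    rw [LinearMap.range_eq_top.2 hsurj] at h1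
    simp only [finrank_top, Module.finrank_pi, Fintype.card_fin] at h1
    omega
  have hle : vectorSpan ℝ S ≤ LinearMap.ker burF := by
    rw [vectorSpan, Submodule.span_le]
    rintro w hw
    rw [Set.mem_vsub] at hw
    obtain ⟨x, hx, y, hy, rfl⟩ := hw
    obtain ⟨⟨-, hx1, hx2, hx3, hx4⟩, -⟩ := hx
    obtain ⟨⟨-, hy1, hy2, hy3, hy4⟩, -⟩ := hy
    have : x -ᵥ y = x - y := rfl
    rw [this, SetLike.mem_coe, LinearMap.mem_ker]
    funext j
    fin_cases j <;> simp [burF] <;> linarith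
  -- lower bound: the 8 vectors lie in the vector span
  have hvmem : ∀ k : Fin 8, burV k ∈ vectorSpan ℝ S := by
    intro k
    have h1 : burQ k -ᵥ burPt ∈ vectorSpan ℝ S := vsub_mem_vectorSpan ℝ (hq k) hpt
    have h2 : burV k = (100 : ℝ) • (burQ k -ᵥ burPt) := by
      funext i
      show burV k i = (100 : ℝ) • (burQ k i - burPt i)
      simp only [burQ, smul_eq_mul]
      ring
    rw [h2]
    exact Submodule.smul_mem _ _ h1
  have hspanle : Submodule.span ℝ (Set.range burV) ≤ vectorSpan ℝ S :=
    Submodule.span_le.2 (Set.range_subset_iff.2 hvmem)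
  -- linear independence via projection to free coordinates
  have hli : LinearIndependent ℝ burV := by
    set σ : Fin 8 → Fin 12 := ![0, 1, 2, 4, 5, 6, 8, 9] with hσ
    set π : (Fin 12 → ℝ) →ₗ[ℝ] (Fin 8 → ℝ) :=
      LinearMap.pi (fun k : Fin 8 => LinearMap.proj (σ k)) with hπ
    apply LinearIndependent.of_comp π
    have hcomp : ⇑π ∘ burV = ⇑(Pi.basisFun ℝ (Fin 8)) := by
      funext k j
      fin_cases k <;> fin_cases j <;>
        norm_num [hπ, hσ, burV, Pi.basisFun_apply, Pi.single_apply, Fin.ext_iff]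
    rw [hcomp]
    exact (Pi.basisFun ℝ (Fin 8)).linearIndependent
  have hspan : Module.finrank ℝ (Submodule.span ℝ (Set.range burV)) = 8 := by
    rw [finrank_span_eq_card hli, Fintype.card_fin]
  constructor
  · have h1 : Module.finrank ℝ (vectorSpan ℝ S) ≤ 8 :=
      hker ▸ Submodule.finrank_mono hle
    have h2 : 8 ≤ Module.finrank ℝ (vectorSpan ℝ S) :=
      hspan ▸ Submodule.finrank_mono hspanle
    omega
  · exact ⟨burPt, hptB, by intro i; fin_cases i <;> norm_num [burPt],
      by norm_num [burPt]⟩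
end

section
/- The subset of the Burniat polytope Δ_bur cut out by the single inequality a_0+b_0+c_0 ≤ 1 (row 8 of the table of maximal-dimensional matroid-polytope intersections) has affine dimension 8, i.e., it is a full-dimensional subpolytope of Δ_bur; equivalently, Δ_bur contains a point satisfying all twelve inequality constraints 0 < a_i,b_i,c_i < 1/2 strictly together with a_0+b_0+c_0 < 1. -/
set_option maxHeartbeats 1600000


/-- An interior base point of the polytope used in the proof. -/
noncomputable def burBase : Fin 12 → ℝ :=
  ![1/4, 5/12, 1/3, 1/4, 1/4, 5/12, 1/3, 1/4, 1/4, 5/12, 1/3, 1/4]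

@[simp] lemma burBase_0 : burBase 0 = 1/4 := rfl
@[simp] lemma burBase_1 : burBase 1 = 5/12 := rfl
@[simp] lemma burBase_2 : burBase 2 = 1/3 := rfl
@[simp] lemma burBase_3 : burBase 3 = 1/4 := rfl
@[simp] lemma burBase_4 : burBase 4 = 1/4 := rfl
@[simp] lemma burBase_5 : burBase 5 = 5/12 := rfl
@[simp] lemma burBase_6 : burBase 6 = 1/3 := rfl
@[simp] lemma burBase_7 : burBase 7 = 1/4 := rfl
@[simp] lemma burBase_8 : burBase 8 = 1/4 := rfl
@[simp] lemma burBase_9 : burBase 9 = 5/12 := rfl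
@[simp] lemma burBase_10 : burBase 10 = 1/3 := rfl
@[simp] lemma burBase_11 : burBase 11 = 1/4 := rfl

/-- Parametrization of the tangent space of the polytope. -/
noncomputable def burVec (u : Fin 8 → ℝ) : Fin 12 → ℝ :=
  ![u 0, u 1, u 2,
    u 6 + u 7 + (-(u 0 + u 1 + u 2 + u 3 + u 4 + u 5 + u 6 + u 7)) + u 3,
    u 3, u 4, u 5,
    u 0 + u 1 + u 2 + u 6,
    u 6, u 7,
    -(u 0 + u 1 + u 2 + u 3 + u 4 + u 5 + u 6 + u 7),
    u 3 + u 4 + u 5 + u 0]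

@[simp] lemma burVec_0 (u : Fin 8 → ℝ) : burVec u 0 = u 0 := rfl
@[simp] lemma burVec_1 (u : Fin 8 → ℝ) : burVec u 1 = u 1 := rfl
@[simp] lemma burVec_2 (u : Fin 8 → ℝ) : burVec u 2 = u 2 := rfl
@[simp] lemma burVec_3 (u : Fin 8 → ℝ) : burVec u 3 =
    u 6 + u 7 + (-(u 0 + u 1 + u 2 + u 3 + u 4 + u 5 + u 6 + u 7)) + u 3 := rfl
@[simp] lemma burVec_4 (u : Fin 8 → ℝ) : burVec u 4 = u 3 := rfl
@[simp] lemma burVec_5 (u : Fin 8 → ℝ) : burVec u 5 = u 4 := rfl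
@[simp] lemma burVec_6 (u : Fin 8 → ℝ) : burVec u 6 = u 5 := rfl
@[simp] lemma burVec_7 (u : Fin 8 → ℝ) : burVec u 7 = u 0 + u 1 + u 2 + u 6 := rfl
@[simp] lemma burVec_8 (u : Fin 8 → ℝ) : burVec u 8 = u 6 := rfl
@[simp] lemma burVec_9 (u : Fin 8 → ℝ) : burVec u 9 = u 7 := rfl
@[simp] lemma burVec_10 (u : Fin 8 → ℝ) : burVec u 10 =
    -(u 0 + u 1 + u 2 + u 3 + u 4 + u 5 + u 6 + u 7) := rfl
@[simp] lemma burVec_11 (u : Fin 8 → ℝ) : burVec u 11 = u 3 + u 4 + u 5 + u 0 := rfl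

@[simp] lemma vec8_0 (a0 a1 a2 a3 a4 a5 a6 a7 : ℝ) :
    (![a0,a1,a2,a3,a4,a5,a6,a7] : Fin 8 → ℝ) 0 = a0 := rfl
@[simp] lemma vec8_1 (a0 a1 a2 a3 a4 a5 a6 a7 : ℝ) :
    (![a0,a1,a2,a3,a4,a5,a6,a7] : Fin 8 → ℝ) 1 = a1 := rfl
@[simp] lemma vec8_2 (a0 a1 a2 a3 a4 a5 a6 a7 : ℝ) :
    (![a0,a1,a2,a3,a4,a5,a6,a7] : Fin 8 → ℝ) 2 = a2 := rfl
@[simp] lemma vec8_3 (a0 a1 a2 a3 a4 a5 a6 a7 : ℝ) :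
    (![a0,a1,a2,a3,a4,a5,a6,a7] : Fin 8 → ℝ) 3 = a3 := rfl
@[simp] lemma vec8_4 (a0 a1 a2 a3 a4 a5 a6 a7 : ℝ) :
    (![a0,a1,a2,a3,a4,a5,a6,a7] : Fin 8 → ℝ) 4 = a4 := rfl
@[simp] lemma vec8_5 (a0 a1 a2 a3 a4 a5 a6 a7 : ℝ) :
    (![a0,a1,a2,a3,a4,a5,a6,a7] : Fin 8 → ℝ) 5 = a5 := rfl
@[simp] lemma vec8_6 (a0 a1 a2 a3 a4 a5 a6 a7 : ℝ) :
    (![a0,a1,a2,a3,a4,a5,a6,a7] : Fin 8 → ℝ) 6 = a6 := rfl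
@[simp] lemma vec8_7 (a0 a1 a2 a3 a4 a5 a6 a7 : ℝ) :
    (![a0,a1,a2,a3,a4,a5,a6,a7] : Fin 8 → ℝ) 7 = a7 := rfl

/-- `burVec` as a linear map. -/
noncomputable def burLin : (Fin 8 → ℝ) →ₗ[ℝ] (Fin 12 → ℝ) where
  toFun := burVec
  map_add' u v := by funext i; fin_cases i <;> simp <;> ring
  map_smul' c u := by funext i; fin_cases i <;> simp <;> ring

@[simp] lemma burLin_apply (u : Fin 8 → ℝ) : burLin u = burVec u := rfl

lemma burVec_smul (c : ℝ) (u : Fin 8 → ℝ) : burVec (c • u) = c • burVec u :=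
  burLin.map_smul c u

lemma burMem (u : Fin 8 → ℝ) (hu : ∀ k, -(1/144) ≤ u k ∧ u k ≤ 1/144) :
    burBase + burVec u ∈ {x ∈ burniatPolytope | x 0 + x 4 + x 8 ≤ 1} := by
  have h0 := hu 0; have h1 := hu 1; have h2 := hu 2; have h3 := hu 3
  have h4 := hu 4; have h5 := hu 5; have h6 := hu 6; have h7 := hu 7
  refine ⟨⟨?_, ?_, ?_, ?_, ?_⟩, ?_⟩
  · intro i
    fin_cases i <;> refine ⟨?_, ?_⟩ <;> simp <;>
      linarith [h0.1, h0.2, h1.1, h1.2, h2.1, h2.2, h3.1, h3.2, h4.1, h4.2,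
        h5.1, h5.2, h6.1, h6.2, h7.1, h7.2]
  · simp; ring
  · simp; ring
  · simp; ring
  · simp; ring
  · simp
    linarith [h0.1, h0.2, h3.1, h3.2, h6.1, h6.2]

lemma burInj : Function.Injective burLin := by
  intro u v h
  simp only [burLin_apply] at h
  funext k
  fin_cases k
  · simpa using congrFun h 0
  · simpa using congrFun h 1
  · simpa using congrFun h 2
  · simpa using congrFun h 4
  · simpa using congrFun h 5
  · simpa using congrFun h 6
  · simpa using congrFun h 8
  · simpa using congrFun h 9

/-- row 8 of the table of maximal-dimensional matroid-polytope
intersections: the subset of the Burniat polytope cut out by `a₀+b₀+c₀ ≤ 1`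
has affine dimension 8, i.e. it is a full-dimensional subpolytope of `Δ_bur`;
equivalently, `Δ_bur` contains a point satisfying all twelve inequality
constraints `0 < a_i, b_i, c_i < 1/2` strictly together with the strict form of
the cutting inequalit(y/ies). -/
theorem burniat_row8_full_dimensional :
    Module.finrank ℝ
      (vectorSpan ℝ {x ∈ burniatPolytope | x 0 + x 4 + x 8 ≤ 1}) = 8 ∧
    ∃ x ∈ burniatPolytope, (∀ i : Fin 12, 0 < x i ∧ x i < 1/2) ∧
      (x 0 + x 4 + x 8 < 1) := by
  constructor
  · have hspan : vectorSpan ℝ {x ∈ burniatPolytope | x 0 + x 4 + x 8 ≤ 1}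
        = LinearMap.range burLin := by
      apply le_antisymm
      · rw [vectorSpan_def, Submodule.span_le]
        rintro v ⟨x, hx, y, hy, rfl⟩
        obtain ⟨⟨-, hxs, hx3, hx7, hx11⟩, -⟩ := hx
        obtain ⟨⟨-, hys, hy3, hy7, hy11⟩, -⟩ := hy
        refine ⟨![x 0 - y 0, x 1 - y 1, x 2 - y 2, x 4 - y 4, x 5 - y 5,
          x 6 - y 6, x 8 - y 8, x 9 - y 9], ?_⟩
        simp only [burLin_apply]
        funext i
        fin_cases i <;> simp [vsub_eq_sub] <;> linarith
      · rintro v ⟨u, rfl⟩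
        have key : ∀ k : Fin 8, burLin ((Pi.single k 1 : Fin 8 → ℝ)) ∈
            vectorSpan ℝ {x ∈ burniatPolytope | x 0 + x 4 + x 8 ≤ 1} := by
          intro k
          have hmem : burBase + burVec ((1/144 : ℝ) • (Pi.single k 1 : Fin 8 → ℝ)) ∈
              {x ∈ burniatPolytope | x 0 + x 4 + x 8 ≤ 1} := by
            apply burMem
            intro j
            by_cases h : j = k <;> simp [Pi.single_apply, h] <;> norm_num
          have hbase : burBase ∈ {x ∈ burniatPolytope | x 0 + x 4 + x 8 ≤ 1} := by
            have := burMem 0 (by intro j; norm_num)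
            have hz : burVec (0 : Fin 8 → ℝ) = 0 := by
              funext i; fin_cases i <;> simp
            rwa [hz, add_zero] at this
          have hv := vsub_mem_vectorSpan ℝ hmem hbase
          have heq : (burBase + burVec ((1/144 : ℝ) • (Pi.single k 1 : Fin 8 → ℝ))) -ᵥ burBase
              = (1/144 : ℝ) • burLin ((Pi.single k 1 : Fin 8 → ℝ)) := by
            simp only [burLin_apply, vsub_eq_sub, burVec_smul, add_sub_cancel_left]
          rw [heq] at hv
          have hsm := Submodule.smul_mem
            (vectorSpan ℝ {x ∈ burniatPolytope | x 0 + x 4 + x 8 ≤ 1})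
            (144 : ℝ) hv
          have h144 : (144 : ℝ) • ((1/144 : ℝ) • burLin (Pi.single k 1 : Fin 8 → ℝ))
              = burLin (Pi.single k 1 : Fin 8 → ℝ) := by
            rw [smul_smul]; norm_num
          rwa [h144] at hsm
        have hu : u = ∑ k : Fin 8, u k • (Pi.single k 1 : Fin 8 → ℝ) := by
          funext j
          simp [Pi.single_apply, Finset.sum_ite_eq']
        rw [hu, map_sum]
        refine Submodule.sum_mem _ fun k _ => ?_
        rw [map_smul]
        exact Submodule.smul_mem _ _ (key k)
    rw [hspan]
    rw [← (LinearEquiv.ofInjective burLin burInj).finrank_eq]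
    simp
  · refine ⟨burBase, ⟨?_, ?_, ?_, ?_, ?_⟩, ?_, ?_⟩
    · intro i; fin_cases i <;> norm_num [burBase]
    · norm_num
    · norm_num
    · norm_num
    · norm_num
    · intro i; fin_cases i <;> norm_num [burBase]
    · norm_num
end
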